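/- arXiv:2407.06179 — 7 statements merged into one kernel-verified Lean document; each statement's English description precedes it below -/
import Mathlib

section
/- There is a constant C depending only on α such that the following holds. Let α ∈ (2,4), let λ₀ depending only on α be sufficiently large, let λ ≥ λ₀, N₀ > 0, σ ∈ {1,2}, and let (τ_k)_{k∈2ℕ+σ} be admissible delays. Let u be a solution of the Obukhov dyadic model on [t₀,∞) with nonnegative coordinates satisfying, for all k ∈ 2ℕ+σ and t ≥ t₀: 0 ≤ u_{k−1}(t) ≤ 3δ_k e^{−2N_k²(t−τ_k)}, |u_k(t) − δ_k e^{−N_k²(t−τ_k)}| ≤ ½ δ_k e^{−N_k²(t−τ_k)}, and u_k(t₀) = δ_k e^{−N_k²(t₀−τ_k)}. Then the good unknowns of u lie in B_{σ,[t₀,∞)}(10), and for every k ∈ 2ℕ+σ one has |z_k(t₀) − ½ e^{−N_k²(t₀−τ_k)}| ≤ C e^{−3N_k²(t₀−τ_k)}. -/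
open Set MeasureTheory
open scoped ENNReal BigOperators

noncomputable section

/-- Frequency scale `N_k = lam^k * N0`. -/
def freq (lam N0 : ℝ) (k : ℤ) : ℝ := lam ^ k * N0

/-- Critical amplitude `delta_k = N_{k-1}^{-alpha} * N_k^2`. -/
def amp (lam N0 alpha : ℝ) (k : ℤ) : ℝ :=
  freq lam N0 (k - 1) ^ (-alpha) * freq lam N0 k ^ 2

/-- Right-hand side of the Obukhov dyadic model (viscosity 1, index set ℕ,
convention `u_{-1} = 0`). -/
def obukhovRHS (lam N0 alpha : ℝ) (u : ℕ → ℝ) (k : ℕ) : ℝ :=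
  -(freq lam N0 (k : ℤ) ^ 2) * u k
    + (if k = 0 then 0 else freq lam N0 ((k : ℤ) - 1) ^ alpha * u (k - 1) * u k)
    - freq lam N0 (k : ℤ) ^ alpha * (u (k + 1)) ^ 2

/-- `u` is a solution of the Obukhov dyadic model on the time set `J`:
every coordinate is differentiable (within `J`) and satisfies the equation. -/
def IsObukhovSolutionOn (lam N0 alpha : ℝ) (u : ℝ → ℕ → ℝ) (J : Set ℝ) : Prop :=
  ∀ k : ℕ, ∀ t ∈ J,
    HasDerivWithinAt (fun s => u s k) (obukhovRHS lam N0 alpha (u t) k) J t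

/-- The time `t₀ = 2 * alpha * N₀⁻² * log lam`. -/
def tInit (lam N0 alpha : ℝ) : ℝ := 2 * alpha / N0 ^ 2 * Real.log lam

/-- The index set `2ℕ + σ = {σ, σ+2, σ+4, ...}`. -/
def shell (σ : ℕ) : Set ℕ := {k | σ ≤ k ∧ k % 2 = σ % 2}

/-- Admissible family of delays: `|N_k² τ_k - (α-2) log λ| ≤ 5` on the shell. -/
def Admissible (lam N0 alpha : ℝ) (σ : ℕ) (τ : ℕ → ℝ) : Prop :=
  ∀ k ∈ shell σ, |freq lam N0 (k : ℤ) ^ 2 * τ k - (alpha - 2) * Real.log lam| ≤ 5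

/-- The good unknown `r_k` of a state `u`. -/
def rGood (lam N0 alpha : ℝ) (u : ℕ → ℝ) (k : ℕ) : ℝ :=
  Real.sqrt ((u (k - 1) / amp lam N0 alpha (k : ℤ) - 1) ^ 2
    + (u k / amp lam N0 alpha (k : ℤ)) ^ 2)

/-- The good unknown `z_k` of a state `u`. -/
def zGood (lam N0 alpha : ℝ) (u : ℕ → ℝ) (k : ℕ) : ℝ :=
  (amp lam N0 alpha (k : ℤ) * (rGood lam N0 alpha u k - 1) + u (k - 1)) / u k

/-- The weight `w_k^r(t)`. -/
def wr (lam N0 alpha : ℝ) (τ : ℕ → ℝ) (k : ℕ) (t : ℝ) : ℝ :=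
  max (lam ^ ((4 - alpha) / 2)) (Real.exp (2 * freq lam N0 (k : ℤ) ^ 2 * (t - τ k)))

/-- The weight `w_k^z(t)`. -/
def wz (lam N0 : ℝ) (τ : ℕ → ℝ) (k : ℕ) (t : ℝ) : ℝ :=
  30 * Real.exp (freq lam N0 (k : ℤ) ^ 2 * (t - τ k))

/-- The good unknowns of `u` lie in the ball `B_{σ,I}(R)`. -/
def GoodInBall (lam N0 alpha : ℝ) (σ : ℕ) (τ : ℕ → ℝ) (u : ℝ → ℕ → ℝ)
    (I : Set ℝ) (R : ℝ) : Prop :=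
  (∀ k ∈ shell σ, ∀ t ∈ I, 0 < u t k) ∧
    ∀ k ∈ shell σ, ∀ t ∈ I,
      wr lam N0 alpha τ k t * |rGood lam N0 alpha (u t) k - 1|
        + wz lam N0 τ k t *
            |zGood lam N0 alpha (u t) k
              - 1 / 2 * Real.exp (-(freq lam N0 (k : ℤ) ^ 2) * (t - τ k))| ≤ R

section Aux

variable {lam N0 alpha : ℝ}

lemma freq_pos (hlam : 0 < lam) (hN0 : 0 < N0) (j : ℤ) : 0 < freq lam N0 j :=
  mul_pos (zpow_pos hlam j) hN0

lemma amp_pos (hlam : 0 < lam) (hN0 : 0 < N0) (j : ℤ) : 0 < amp lam N0 alpha j := by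
  have h1 := freq_pos (lam := lam) (N0 := N0) hlam hN0 (j-1)
  have h2 := freq_pos (lam := lam) (N0 := N0) hlam hN0 j
  unfold amp
  positivity

lemma freq_succ (hlam : 0 < lam) (j : ℤ) : freq lam N0 (j+1) = lam * freq lam N0 j := by
  unfold freq
  rw [zpow_add_one₀ hlam.ne']
  ring

lemma rpow_two_mul (hlam : 0 < lam) (b : ℝ) : lam ^ ((2:ℝ) - b) = lam ^ (2:ℕ) * lam ^ (-b) := by
  rw [show (2:ℝ) - b = 2 + (-b) by ring, Real.rpow_add hlam, ← Real.rpow_natCast lam 2]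
  norm_num

lemma amp_succ (hlam : 0 < lam) (hN0 : 0 < N0) (j : ℤ) :
    amp lam N0 alpha (j+1) = lam ^ ((2:ℝ) - alpha) * amp lam N0 alpha j := by
  have hf := freq_pos (lam := lam) (N0 := N0) hlam hN0 (j-1)
  have e1 : freq lam N0 j = lam * freq lam N0 (j-1) := by
    rw [show j = (j-1)+1 by ring, freq_succ hlam]
    ring_nf
  unfold amp
  rw [show j+1-1 = j by ring, e1, freq_succ hlam, e1]
  rw [Real.mul_rpow hlam.le hf.le, rpow_two_mul hlam alpha]
  ring

lemma amp_mul_rpow (hlam : 0 < lam) (hN0 : 0 < N0) (j : ℤ) :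
    freq lam N0 j ^ alpha * amp lam N0 alpha j = lam ^ alpha * freq lam N0 j ^ 2 := by
  have hf := freq_pos (lam := lam) (N0 := N0) hlam hN0 (j-1)
  have e1 : freq lam N0 j = lam * freq lam N0 (j-1) := by
    rw [show j = (j-1)+1 by ring, freq_succ hlam]; ring_nf
  unfold amp
  rw [e1, Real.mul_rpow hlam.le hf.le]
  have h1 : freq lam N0 (j-1) ^ alpha * freq lam N0 (j-1) ^ (-alpha) = 1 := by
    rw [← Real.rpow_add hf]; simp
  calc lam ^ alpha * freq lam N0 (j-1) ^ alpha *
        (freq lam N0 (j-1) ^ (-alpha) * (lam * freq lam N0 (j-1)) ^ 2)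
      = lam ^ alpha * (lam * freq lam N0 (j-1)) ^ 2 *
          (freq lam N0 (j-1) ^ alpha * freq lam N0 (j-1) ^ (-alpha)) := by ring
    _ = lam ^ alpha * (lam * freq lam N0 (j-1)) ^ 2 := by rw [h1]; ring

lemma freq_mul_amp (hlam : 0 < lam) (hN0 : 0 < N0) (j : ℤ) :
    freq lam N0 (j-1) ^ alpha * amp lam N0 alpha j = freq lam N0 j ^ 2 := by
  have hf := freq_pos (lam := lam) (N0 := N0) hlam hN0 (j-1)
  unfold amp
  rw [← mul_assoc, ← Real.rpow_add hf]
  simp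

lemma ratio_eq (hlam : 0 < lam) (hN0 : 0 < N0) (j : ℤ) :
    freq lam N0 j ^ alpha * amp lam N0 alpha (j+2) ^ 2
      = lam ^ ((8:ℝ) - 3*alpha) * (freq lam N0 j ^ 2 * amp lam N0 alpha j) := by
  have ha2 : amp lam N0 alpha (j+2)
      = lam ^ ((2:ℝ)-alpha) * (lam ^ ((2:ℝ)-alpha) * amp lam N0 alpha j) := by
    rw [show j+2 = (j+1)+1 by ring, amp_succ hlam hN0, amp_succ hlam hN0]
  rw [ha2]
  have hmul := amp_mul_rpow (alpha := alpha) hlam hN0 j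
  have hpow : (lam ^ ((2:ℝ)-alpha))^(2:ℕ) * (lam ^ ((2:ℝ)-alpha))^(2:ℕ) * lam ^ alpha
      = lam ^ ((8:ℝ) - 3*alpha) := by
    rw [← Real.rpow_natCast (lam ^ ((2:ℝ)-alpha)) 2, ← Real.rpow_mul hlam.le,
      ← Real.rpow_add hlam, ← Real.rpow_add hlam]
    norm_num
    ring_nf
  calc freq lam N0 j ^ alpha *
        (lam ^ ((2:ℝ)-alpha) * (lam ^ ((2:ℝ)-alpha) * amp lam N0 alpha j)) ^ 2
      = (lam ^ ((2:ℝ)-alpha))^(2:ℕ) * (lam ^ ((2:ℝ)-alpha))^(2:ℕ) *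
          (freq lam N0 j ^ alpha * amp lam N0 alpha j) * amp lam N0 alpha j := by ring
    _ = (lam ^ ((2:ℝ)-alpha))^(2:ℕ) * (lam ^ ((2:ℝ)-alpha))^(2:ℕ) *
          (lam ^ alpha * freq lam N0 j ^ 2) * amp lam N0 alpha j := by rw [hmul]
    _ = ((lam ^ ((2:ℝ)-alpha))^(2:ℕ) * (lam ^ ((2:ℝ)-alpha))^(2:ℕ) * lam ^ alpha) *
          (freq lam N0 j ^ 2 * amp lam N0 alpha j) := by ring
    _ = lam ^ ((8:ℝ) - 3*alpha) * (freq lam N0 j ^ 2 * amp lam N0 alpha j) := by rw [hpow]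

lemma aux_r_bound {E x y ε : ℝ} (hE : 0 < E) (hE1 : E ≤ 1/10)
    (hε0 : 0 ≤ ε) (hε : ε ≤ 1/2)
    (hx0 : 0 ≤ x) (hx : x ≤ 3*E^2) (hy : |y - E| ≤ ε*E) :
    |Real.sqrt ((x-1)^2 + y^2) - 1| ≤ 9*E^2 := by
  set r := Real.sqrt ((x-1)^2 + y^2) with hr
  have hr0 : 0 ≤ r := Real.sqrt_nonneg _
  have hr2 : r^2 = (x-1)^2 + y^2 := Real.sq_sqrt (by positivity)
  have h1 : |r - 1| * (r + 1) = |r^2 - 1| := by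
    rw [← abs_of_nonneg (show (0:ℝ) ≤ r + 1 by linarith), ← abs_mul]
    ring_nf
  rw [abs_le] at hy
  have hx2 : x^2 ≤ 9*E^4 := by nlinarith
  have hE2 : E^2 ≤ 1/100 := by nlinarith
  have hE4 : E^4 ≤ E^2/100 := by
    calc E^4 = E^2*E^2 := by ring
      _ ≤ E^2*(1/100) := mul_le_mul_of_nonneg_left hE2 (sq_nonneg E)
      _ = E^2/100 := by ring
  have hy15 : 0 ≤ y ∧ y ≤ 3/2*E := by constructor <;> nlinarith
  have hysq : y^2 ≤ 9/4*E^2 := by nlinarith [hy15.1, hy15.2]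
  have h2 : |r^2 - 1| ≤ 9*E^2 := by
    rw [abs_le]
    constructor <;> nlinarith
  calc |r-1| ≤ |r-1| * (r+1) := by nlinarith [abs_nonneg (r-1)]
    _ = |r^2-1| := h1
    _ ≤ 9*E^2 := h2

lemma aux_z_bound {E x y ε : ℝ} (hE : 0 < E) (hE1 : E ≤ 1/10)
    (hε0 : 0 ≤ ε) (hε : ε ≤ 1/2)
    (hx0 : 0 ≤ x) (hx : x ≤ 3*E^2) (hy : |y - E| ≤ ε*E) :
    |((Real.sqrt ((x-1)^2 + y^2) - 1) + x)/y - E/2| ≤ E*(3*ε + 90*E^2) := by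
  have hrb := aux_r_bound hE hE1 hε0 hε hx0 hx hy
  set r := Real.sqrt ((x-1)^2 + y^2) with hr
  have hr0 : 0 ≤ r := Real.sqrt_nonneg _
  have hr2 : r^2 = (x-1)^2 + y^2 := Real.sq_sqrt (by positivity)
  have hyy : |y*(y-E)| ≤ 3/2*ε*E^2 := by
    rw [abs_mul]
    have h1 : |y| ≤ 3/2*E := by
      rw [abs_le] at hy ⊢; constructor <;> nlinarith
    calc |y| * |y - E| ≤ (3/2*E)*(ε*E) :=
          mul_le_mul h1 hy (abs_nonneg _) (by linarith)
      _ = 3/2*ε*E^2 := by ring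
  have hr1sq : (r-1)^2 ≤ 81*E^4 := by
    calc (r-1)^2 = |r-1|^2 := (sq_abs _).symm
      _ ≤ (9*E^2)^2 := by
          apply pow_le_pow_left₀ (abs_nonneg _) hrb
      _ = 81*E^4 := by ring
  rw [abs_le] at hy
  have hy2 : E/2 ≤ y := by nlinarith
  have hy0 : 0 < y := by linarith
  have hid2 : ((r-1)+x) - E/2*y = (x^2 + y*(y-E) - (r-1)^2)/2 := by
    linear_combination (1/2)*hr2
  have hid : ((r - 1) + x)/y - E/2 = (x^2 + y*(y-E) - (r-1)^2)/(2*y) := by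
    rw [show ((r-1)+x)/y - E/2 = (((r-1)+x) - E/2*y)/y by field_simp, hid2, div_div]
  have hx2 : x^2 ≤ 9*E^4 := by nlinarith
  have hE2 : E^2 ≤ 1/100 := by nlinarith
  have hE4 : E^4 ≤ E^2/100 := by
    calc E^4 = E^2*E^2 := by ring
      _ ≤ E^2*(1/100) := mul_le_mul_of_nonneg_left hE2 (sq_nonneg E)
      _ = E^2/100 := by ring
  have hE40 : (0:ℝ) ≤ E^4 := by positivity
  have hexp : E^2*(3/2*ε + 90*E^2) = 3/2*ε*E^2 + 90*E^4 := by ring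
  have hnum : |x^2 + y*(y-E) - (r-1)^2| ≤ E^2*(3/2*ε + 90*E^2) := by
    rw [abs_le] at hyy ⊢
    constructor
    · rw [hexp]; linarith [sq_nonneg (r-1), sq_nonneg x]
    · rw [hexp]; linarith [sq_nonneg (r-1)]
  rw [hid, abs_div, abs_of_pos (by linarith : (0:ℝ) < 2*y)]
  rw [div_le_iff₀ (by linarith)]
  have hfac : (0:ℝ) ≤ E*ε := by positivity
  have h : (0:ℝ) ≤ E*(3*ε+90*E^2) := by positivity
  have hfac2 : (0:ℝ) ≤ E^2*ε := by positivity
  calc |x^2 + y*(y-E) - (r-1)^2| ≤ E^2*(3/2*ε + 90*E^2) := hnum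
    _ ≤ E*(3*ε+90*E^2) * (2*(E/2)) := by
        have e : E*(3*ε+90*E^2) * (2*(E/2)) - E^2*(3/2*ε + 90*E^2) = 3/2*(E^2*ε) := by ring
        linarith
    _ ≤ E*(3*ε+90*E^2) * (2*y) := by
        apply mul_le_mul_of_nonneg_left (by linarith) h

lemma aux_decay {t0 c M : ℝ} {g g' : ℝ → ℝ} (hc : 0 < c) (hM : 0 ≤ M)
    (hg : ∀ t ∈ Ici t0, HasDerivWithinAt g (g' t) (Ici t0) t)
    (hb : ∀ t ∈ Ici t0, |g' t| ≤ M * Real.exp (-(2*c*(t - t0))))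
    {t : ℝ} (ht : t0 ≤ t) : |g t - g t0| ≤ M/(2*c) := by
  set B : ℝ → ℝ := fun s => M/(2*c) * (1 - Real.exp (-(2*c*(s-t0)))) with hBdef
  have hBd : ∀ s : ℝ, HasDerivAt B (M * Real.exp (-(2*c*(s - t0)))) s := by
    intro s
    have h1 : HasDerivAt (fun u : ℝ => -(2*c*(u-t0))) (-(2*c)) s := by
      have h0 := (((hasDerivAt_id s).sub_const t0).const_mul (2*c)).neg
      rw [mul_one] at h0
      exact h0
    have h2 := ((h1.exp).const_sub 1).const_mul (M/(2*c))
    refine h2.congr_deriv ?_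
    have e : M/(2*c) * (2*c) = M := div_mul_cancel₀ M (by positivity)
    linear_combination (Real.exp (-(2*c*(s-t0)))) * e
  have key : ∀ s ∈ Icc t0 t, ‖g s - g t0‖ ≤ B s := by
    apply image_norm_le_of_norm_deriv_right_le_deriv_boundary
      (f := fun s => g s - g t0) (f' := g') (B := B)
      (B' := fun s => M * Real.exp (-(2*c*(s - t0))))
    · intro s hs
      exact (((hg s hs.1).sub_const (g t0)).mono (Icc_subset_Ici_self)).continuousWithinAt
    · intro s hs
      exact ((hg s hs.1).sub_const (g t0)).mono (Ici_subset_Ici.mpr hs.1)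
    · simp [hBdef]
    · exact hBd
    · intro s hs
      simpa using hb s hs.1
  have h1 := key t ⟨ht, le_refl t⟩
  rw [Real.norm_eq_abs] at h1
  refine h1.trans ?_
  have he : 0 < Real.exp (-(2*c*(t-t0))) := Real.exp_pos _
  have hM2 : 0 ≤ M/(2*c) := by positivity
  calc M/(2*c) * (1 - Real.exp (-(2*c*(t-t0)))) ≤ M/(2*c) * 1 := by nlinarith
    _ = M/(2*c) := by ring

end Aux

set_option maxHeartbeats 2000000 in
/-- Lemma 3.1: the reference solution, written in the good unknowns, lies in
`B_{σ,[t₀,∞)}(10)`, with an improved bound for `z_k` at time `t₀`. -/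
theorem good_unknowns_initial_bounds (alpha : ℝ) (hα : alpha ∈ Ioo (2 : ℝ) 4) :
    ∃ C : ℝ, 0 < C ∧ ∃ lam0 : ℝ, 1 < lam0 ∧
      ∀ lam : ℝ, lam0 ≤ lam → ∀ N0 : ℝ, 0 < N0 →
      ∀ σ ∈ ({1, 2} : Set ℕ), ∀ τ : ℕ → ℝ, Admissible lam N0 alpha σ τ →
      ∀ u : ℝ → ℕ → ℝ,
        IsObukhovSolutionOn lam N0 alpha u (Ici (tInit lam N0 alpha)) →
        (∀ k : ℕ, ∀ t ∈ Ici (tInit lam N0 alpha), 0 ≤ u t k) →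
        (∀ k ∈ shell σ, ∀ t ∈ Ici (tInit lam N0 alpha),
          u t (k - 1) ≤ 3 * amp lam N0 alpha (k : ℤ)
              * Real.exp (-(2 * freq lam N0 (k : ℤ) ^ 2) * (t - τ k)) ∧
          |u t k - amp lam N0 alpha (k : ℤ)
              * Real.exp (-(freq lam N0 (k : ℤ) ^ 2) * (t - τ k))|
            ≤ 1 / 2 * amp lam N0 alpha (k : ℤ)
                * Real.exp (-(freq lam N0 (k : ℤ) ^ 2) * (t - τ k))) →
        (∀ k ∈ shell σ,
          u (tInit lam N0 alpha) k = amp lam N0 alpha (k : ℤ)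
              * Real.exp (-(freq lam N0 (k : ℤ) ^ 2) * (tInit lam N0 alpha - τ k))) →
        GoodInBall lam N0 alpha σ τ u (Ici (tInit lam N0 alpha)) 10 ∧
        ∀ k ∈ shell σ,
          |zGood lam N0 alpha (u (tInit lam N0 alpha)) k
              - 1 / 2 * Real.exp (-(freq lam N0 (k : ℤ) ^ 2)
                  * (tInit lam N0 alpha - τ k))|
            ≤ C * Real.exp (-(3 * freq lam N0 (k : ℤ) ^ 2)
                  * (tInit lam N0 alpha - τ k)) := by
  obtain ⟨hα2, hα4⟩ := hα
  refine ⟨100, by norm_num, 100, by norm_num, ?_⟩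
  intro lam hlam N0 hN0 σ hσ τ hτ u husol hupos hbd hinit
  have hlam1 : (1:ℝ) < lam := by linarith
  have hlam0 : (0:ℝ) < lam := by linarith
  have hσ1 : 1 ≤ σ := by
    simp only [Set.mem_insert_iff, Set.mem_singleton_iff] at hσ
    rcases hσ with h | h <;> omega
  have hL4 : (4:ℝ) ≤ Real.log lam := by
    rw [Real.le_log_iff_exp_le hlam0]
    have h1 : Real.exp (4:ℝ) = (Real.exp 1)^(4:ℕ) := by
      rw [← Real.exp_nat_mul]; norm_num
    have h2 := Real.exp_one_lt_d9
    have h3 := Real.exp_pos 1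
    rw [h1]
    have e2 : Real.exp 1 ^ 2 < 7.39 := by nlinarith
    nlinarith [e2, sq_nonneg (Real.exp 1)]
  set L := Real.log lam with hLdef
  set t0 := tInit lam N0 alpha with ht0def
  have key : ∀ k ∈ shell σ,
      (∀ t ∈ Ici t0, 0 < u t k) ∧
      (∀ t ∈ Ici t0,
        wr lam N0 alpha τ k t * |rGood lam N0 alpha (u t) k - 1|
          + wz lam N0 τ k t *
              |zGood lam N0 alpha (u t) k
                - 1 / 2 * Real.exp (-(freq lam N0 (k : ℤ) ^ 2) * (t - τ k))| ≤ 10) ∧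
      |zGood lam N0 alpha (u t0) k
          - 1 / 2 * Real.exp (-(freq lam N0 (k : ℤ) ^ 2) * (t0 - τ k))|
        ≤ 100 * Real.exp (-(3 * freq lam N0 (k : ℤ) ^ 2) * (t0 - τ k)) := by
    intro k hk
    have hk1 : 1 ≤ k := le_trans hσ1 hk.1
    have hk2 : (k+2) ∈ shell σ := by
      have h1 := hk.1
      have h2 := hk.2
      exact ⟨by omega, by omega⟩
    have hfk := freq_pos (lam := lam) (N0 := N0) hlam0 hN0 (k:ℤ)
    have hfk2 := freq_pos (lam := lam) (N0 := N0) hlam0 hN0 ((k:ℤ)+2)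
    have hfk1 := freq_pos (lam := lam) (N0 := N0) hlam0 hN0 ((k:ℤ)-1)
    set c := freq lam N0 (k:ℤ) ^ 2 with hcdef
    set δ := amp lam N0 alpha (k:ℤ) with hδdef
    set c2 := freq lam N0 ((k:ℤ)+2) ^ 2 with hc2def
    set δ2 := amp lam N0 alpha ((k:ℤ)+2) with hδ2def
    have hc : 0 < c := by rw [hcdef]; positivity
    have hδ : 0 < δ := by rw [hδdef]; exact amp_pos hlam0 hN0 _
    have hc2pos : 0 < c2 := by rw [hc2def]; positivity
    have hδ2pos : 0 < δ2 := by rw [hδ2def]; exact amp_pos hlam0 hN0 _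
    have hc2eq : c2 = lam^(4:ℕ) * c := by
      rw [hc2def, hcdef, show (k:ℤ)+2 = ((k:ℤ)+1)+1 by ring, freq_succ hlam0, freq_succ hlam0]
      ring
    -- admissibility
    have hadm := hτ k hk
    have hadm2 := hτ (k+2) hk2
    push_cast at hadm2
    rw [← hcdef, ← hLdef] at hadm
    rw [← hc2def, ← hLdef] at hadm2
    rw [abs_le] at hadm hadm2
    -- lower bound on S_k
    have hlamk : lam ≤ lam ^ (k:ℤ) := by
      calc lam = lam ^ (1:ℤ) := (zpow_one lam).symm
        _ ≤ lam ^ (k:ℤ) := zpow_le_zpow_right₀ hlam1.le (by exact_mod_cast hk1)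
    have h100 : (100:ℝ) ≤ lam ^ (k:ℤ) := by linarith only [hlamk, hlam]
    have hP : (10000:ℝ) ≤ (lam ^ (k:ℤ))^2 := by
      calc (10000:ℝ) = 100^2 := by norm_num
        _ ≤ (lam ^ (k:ℤ))^2 := pow_le_pow_left₀ (by norm_num) h100 2
    have hceq2 : c = (lam ^ (k:ℤ))^2 * N0^2 := by rw [hcdef]; unfold freq; ring
    have hct0 : c * t0 = 2*alpha*((lam ^ (k:ℤ))^2)*L := by
      rw [hceq2, ht0def]; unfold tInit
      rw [← hLdef]
      field_simp
    set Sk := c * (t0 - τ k) with hSkdef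
    have hLpos : (0:ℝ) < L := by linarith only [hL4]
    have hS1 : 2*alpha*((lam ^ (k:ℤ))^2*L) - ((alpha-2)*L+5) ≤ Sk := by
      rw [hSkdef, mul_sub, hct0]
      have : 2*alpha*((lam ^ (k:ℤ))^2*L) = 2*alpha*((lam ^ (k:ℤ))^2)*L := by ring
      linarith only [hadm.2, this.le, this.ge]
    have hPL : 10000*L ≤ ((lam ^ (k:ℤ))^2)*L := mul_le_mul_of_nonneg_right hP hLpos.le
    have hPL0 : (0:ℝ) ≤ (lam ^ (k:ℤ))^2*L := mul_nonneg (sq_nonneg _) hLpos.le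
    have h4aPL : 4*((lam ^ (k:ℤ))^2*L) ≤ 2*alpha*((lam ^ (k:ℤ))^2*L) :=
      mul_le_mul_of_nonneg_right (by linarith only [hα2]) hPL0
    have hαL2 : (alpha-2)*L ≤ 2*L := mul_le_mul_of_nonneg_right (by linarith only [hα4]) hLpos.le
    have hS30 : 30 ≤ Sk := by linarith only [hS1, h4aPL, hPL, hαL2, hL4, hLpos]
    have hSL : L ≤ Sk := by linarith only [hS1, h4aPL, hPL, hαL2, hL4, hLpos]
    -- E0 bounds
    set E0 := Real.exp (-Sk) with hE0def
    have hE0pos : 0 < E0 := Real.exp_pos _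
    have h15 : (16:ℝ) ≤ Real.exp 15 := by linarith only [Real.add_one_le_exp (15:ℝ)]
    have h30 : (256:ℝ) ≤ Real.exp 30 := by
      rw [show (30:ℝ) = 15+15 by norm_num, Real.exp_add]; nlinarith only [h15, Real.exp_pos (15:ℝ)]
    have hE0le : E0 ≤ 1/256 := by
      have h1 : E0 ≤ Real.exp (-(30:ℝ)) := by
        rw [hE0def]; exact Real.exp_le_exp.mpr (by linarith only [hS30])
      have h3 : Real.exp (-(30:ℝ)) ≤ 1/256 := by
        rw [Real.exp_neg, inv_le_comm₀ (Real.exp_pos 30) (by norm_num)]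
        linarith only [h30]
      linarith only [h1, h3]
    have hE0sq : E0^2 ≤ 1/65536 := by nlinarith only [hE0pos, hE0le]
    have hε0 : (0:ℝ) ≤ 5/2*E0^2 := by positivity
    have hεhalf : 5/2*E0^2 ≤ 1/2 := by linarith only [hE0sq]
    -- key exponent inequality
    have hkey : ∀ s : ℝ, t0 ≤ s →
        freq lam N0 (k:ℤ) ^ alpha * (3*δ2*Real.exp (-(2*(c2*(s - τ (k+2))))))^2
            * Real.exp (c*(s - τ k))
          ≤ 1/2*c*δ*(Real.exp (-(c*(s - τ k))))^2 := by
      intro s hs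
      have hA : Sk ≤ c*(s - τ k) := by
        rw [hSkdef]
        have hmul := mul_le_mul_of_nonneg_left hs hc.le
        linarith only [hmul]
      set A := c*(s - τ k) with hAdef
      set Θ := c2*(s - τ (k+2)) with hΘdef
      have hD : 3*L ≤ 4*Θ - 3*A := by
        have h2 : Θ = lam^(4:ℕ)*(A + c*τ k) - c2*τ (k+2) := by
          rw [hΘdef, hAdef, hc2eq]; ring
        have hl2 : (10000:ℝ) ≤ lam^2 := by
          calc (10000:ℝ) = 100^2 := by norm_num
            _ ≤ lam^2 := pow_le_pow_left₀ (by norm_num) (by linarith only [hlam]) 2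
        have hl4 : (100000000:ℝ) ≤ lam^(4:ℕ) := by
          calc (100000000:ℝ) = 10000^2 := by norm_num
            _ ≤ (lam^2)^2 := pow_le_pow_left₀ (by norm_num) hl2 2
            _ = lam^(4:ℕ) := by ring
        have hA5 : 25 ≤ A - 5 := by linarith only [hA, hS30]
        have hprod : 100000000*(A-5) ≤ lam^(4:ℕ)*(A + c*τ k) := by
          calc 100000000*(A-5) ≤ lam^(4:ℕ)*(A-5) :=
                mul_le_mul_of_nonneg_right hl4 (by linarith only [hA5])
            _ ≤ lam^(4:ℕ)*(A + c*τ k) := by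
                apply mul_le_mul_of_nonneg_left _ (by positivity)
                have hge0 : 0 ≤ (alpha-2)*L :=
                  mul_nonneg (by linarith only [hα2]) hLpos.le
                linarith only [hadm.1, hge0]
        rw [h2]
        linarith only [hprod, hadm2.2, hSL, hS30, hA, hαL2, hL4, hLpos, hadm.1]
      -- ratio identity
      have hr := ratio_eq (alpha := alpha) hlam0 hN0 (k:ℤ)
      rw [← hcdef, ← hδdef, ← hδ2def] at hr
      have hβ : lam^((8:ℝ)-3*alpha) ≤ lam^(2:ℕ) := by
        calc lam^((8:ℝ)-3*alpha) ≤ lam^((2:ℝ)) := by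
              rw [Real.rpow_le_rpow_left_iff hlam1]; linarith only [hα2]
          _ = lam^(2:ℕ) := by
              rw [← Real.rpow_natCast lam 2]; norm_num
      have hexp3L : Real.exp (3*L) = lam^(3:ℕ) := by
        rw [show (3:ℝ)*L = L+(L+L) by ring, Real.exp_add, Real.exp_add, hLdef,
          Real.exp_log hlam0]
        ring
      have hβpos : (0:ℝ) < lam^((8:ℝ)-3*alpha) := Real.rpow_pos_of_pos hlam0 _
      have h18 : 18*lam^((8:ℝ)-3*alpha) ≤ Real.exp (4*Θ-3*A) := by
        calc 18*lam^((8:ℝ)-3*alpha) ≤ 18*lam^(2:ℕ) := by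
              apply mul_le_mul_of_nonneg_left hβ (by norm_num)
          _ ≤ lam^(3:ℕ) := by nlinarith only [mul_nonneg (sq_nonneg lam) (show (0:ℝ) ≤ lam - 18 by linarith only [hlam])]
          _ = Real.exp (3*L) := hexp3L.symm
          _ ≤ Real.exp (4*Θ-3*A) := Real.exp_le_exp.mpr (by linarith only [hD, hLpos])
      set X2 := Real.exp (-(2*Θ)) with hX2def
      have hX2pos : 0 < X2 := Real.exp_pos _
      have e1 : X2^2 * Real.exp A * Real.exp (4*Θ-3*A) = (Real.exp (-A))^2 := by
        rw [hX2def, sq, sq, ← Real.exp_add, ← Real.exp_add, ← Real.exp_add, ← Real.exp_add]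
        congr 1; ring
      have hpos2 : 0 < X2^2 * Real.exp A := mul_pos (pow_pos hX2pos 2) (Real.exp_pos _)
      have step : 9*(lam^((8:ℝ)-3*alpha)) * (X2^2 * Real.exp A) ≤ 1/2 * (Real.exp (-A))^2 := by
        calc 9*(lam^((8:ℝ)-3*alpha)) * (X2^2 * Real.exp A)
            = 1/2*((X2^2 * Real.exp A)*(18*lam^((8:ℝ)-3*alpha))) := by ring
          _ ≤ 1/2*((X2^2 * Real.exp A)*Real.exp (4*Θ-3*A)) := by
              apply mul_le_mul_of_nonneg_left
                (mul_le_mul_of_nonneg_left h18 hpos2.le) (by norm_num)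
          _ = 1/2 * (Real.exp (-A))^2 := by rw [mul_assoc, ← mul_assoc (X2^2), e1]
      calc freq lam N0 (k:ℤ) ^ alpha * (3*δ2*X2)^2 * Real.exp A
          = 9*(freq lam N0 (k:ℤ) ^ alpha * δ2^2) * (X2^2 * Real.exp A) := by ring
        _ = 9*(lam^((8:ℝ)-3*alpha) * (c*δ)) * (X2^2 * Real.exp A) := by rw [hr]
        _ = (c*δ) * (9*(lam^((8:ℝ)-3*alpha)) * (X2^2 * Real.exp A)) := by ring
        _ ≤ (c*δ) * (1/2 * (Real.exp (-A))^2) := by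
            apply mul_le_mul_of_nonneg_left step (mul_nonneg hc.le hδ.le)
        _ = 1/2*c*δ*(Real.exp (-A))^2 := by ring
    -- frequency identity
    have hfmul := freq_mul_amp (alpha := alpha) hlam0 hN0 (k:ℤ)
    rw [← hcdef, ← hδdef] at hfmul
    -- the derivative of g
    set g : ℝ → ℝ := fun s => u s k * Real.exp (c * (s - τ k)) with hgdef
    set g' : ℝ → ℝ := fun s =>
      (freq lam N0 ((k:ℤ)-1) ^ alpha * u s (k-1) * u s k
        - freq lam N0 (k:ℤ) ^ alpha * (u s (k+1))^2) * Real.exp (c * (s - τ k)) with hg'def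
    have hg : ∀ s ∈ Ici t0, HasDerivWithinAt g (g' s) (Ici t0) s := by
      intro s hs
      have hex : HasDerivAt (fun w : ℝ => Real.exp (c * (w - τ k)))
          (Real.exp (c * (s - τ k)) * c) s := by
        simpa using (((hasDerivAt_id s).sub_const (τ k)).const_mul c).exp
      have hd := (husol k s hs).mul hex.hasDerivWithinAt
      have : g' s = obukhovRHS lam N0 alpha (u s) k * Real.exp (c * (s - τ k))
          + u s k * (Real.exp (c * (s - τ k)) * c) := by
        simp only [hg'def]
        unfold obukhovRHS
        rw [if_neg (by omega : ¬ k = 0), ← hcdef]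
        ring
      rw [this]
      exact hd
    -- derivative bound
    have hgb : ∀ s ∈ Ici t0, |g' s| ≤ (5*c*δ*E0^2) * Real.exp (-(2*c*(s - t0))) := by
      intro s hs
      have hs' : t0 ≤ s := hs
      obtain ⟨hb1, hb2⟩ := hbd k hk s hs
      have hb1' := (hbd (k+2) hk2 s hs).1
      push_cast at hb1'
      rw [← hcdef, ← hδdef] at hb1 hb2
      rw [← hc2def, ← hδ2def] at hb1'
      set Es := Real.exp (-(c * (s - τ k))) with hEsdef
      have hEspos : 0 < Es := Real.exp_pos _
      have hEe : Real.exp (c * (s - τ k)) * Es = 1 := by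
        rw [hEsdef, ← Real.exp_add]; simp
      rw [show -(2*c)*(s - τ k) = -(c*(s - τ k)) + -(c*(s - τ k)) by ring, Real.exp_add,
        ← hEsdef] at hb1
      rw [show -c*(s - τ k) = -(c*(s - τ k)) by ring, ← hEsdef] at hb2
      rw [show -(2*c2)*(s - τ (k+2)) = -(2*(c2*(s - τ (k+2)))) by ring] at hb1'
      have hupos1 := hupos (k-1) s hs
      have hupos2 := hupos k s hs
      have hupos3 := hupos (k+1) s hs
      have hfka : 0 < freq lam N0 ((k:ℤ)-1) ^ alpha := Real.rpow_pos_of_pos hfk1 _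
      have hfkalpha : 0 < freq lam N0 (k:ℤ) ^ alpha := Real.rpow_pos_of_pos hfk _
      have hub2 : u s k ≤ 3/2*δ*Es := by
        rw [abs_le] at hb2; linarith only [hb2.2]
      have hT1 : freq lam N0 ((k:ℤ)-1) ^ alpha * u s (k-1) * u s k
          ≤ 9/2*c*δ*(Es*Es)*Es := by
        have h1 : freq lam N0 ((k:ℤ)-1) ^ alpha * u s (k-1)
            ≤ freq lam N0 ((k:ℤ)-1) ^ alpha * (3*δ*(Es*Es)) :=
          mul_le_mul_of_nonneg_left hb1 hfka.le
        have h2 : freq lam N0 ((k:ℤ)-1) ^ alpha * u s (k-1) * u s k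
            ≤ (freq lam N0 ((k:ℤ)-1) ^ alpha * (3*δ*(Es*Es))) * (3/2*δ*Es) :=
          mul_le_mul h1 hub2 hupos2 (mul_nonneg hfka.le (by nlinarith only [mul_pos hEspos hEspos, hδ]))
        calc freq lam N0 ((k:ℤ)-1) ^ alpha * u s (k-1) * u s k
            ≤ (freq lam N0 ((k:ℤ)-1) ^ alpha * (3*δ*(Es*Es))) * (3/2*δ*Es) := h2
          _ = 9/2*(freq lam N0 ((k:ℤ)-1) ^ alpha * δ)*δ*(Es*Es)*Es := by ring
          _ = 9/2*c*δ*(Es*Es)*Es := by rw [hfmul]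
      have hb1'' : u s (k+1) ≤ 3*δ2*Real.exp (-(2*(c2*(s - τ (k+2))))) := hb1'
      have hT2 : freq lam N0 (k:ℤ) ^ alpha * (u s (k+1))^2
          ≤ freq lam N0 (k:ℤ) ^ alpha * (3*δ2*Real.exp (-(2*(c2*(s - τ (k+2))))))^2 :=
        mul_le_mul_of_nonneg_left (pow_le_pow_left₀ hupos3 hb1'' 2) hfkalpha.le
      have hkeys := hkey s hs'
      rw [← hEsdef] at hkeys
      -- combine
      have hT1x : 0 ≤ freq lam N0 ((k:ℤ)-1) ^ alpha * u s (k-1) * u s k :=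
        mul_nonneg (mul_nonneg hfka.le hupos1) hupos2
      have hT2x : 0 ≤ freq lam N0 (k:ℤ) ^ alpha * (u s (k+1))^2 :=
        mul_nonneg hfkalpha.le (sq_nonneg _)
      have habs : |freq lam N0 ((k:ℤ)-1) ^ alpha * u s (k-1) * u s k
            - freq lam N0 (k:ℤ) ^ alpha * (u s (k+1))^2|
          ≤ freq lam N0 ((k:ℤ)-1) ^ alpha * u s (k-1) * u s k
            + freq lam N0 (k:ℤ) ^ alpha * (u s (k+1))^2 := by
        rw [abs_le]; constructor <;> linarith only [hT1x, hT2x]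
      have hEx : 0 < Real.exp (c * (s - τ k)) := Real.exp_pos _
      have hgabs : |g' s| ≤ (freq lam N0 ((k:ℤ)-1) ^ alpha * u s (k-1) * u s k
            + freq lam N0 (k:ℤ) ^ alpha * (u s (k+1))^2) * Real.exp (c * (s - τ k)) := by
        simp only [hg'def]
        rw [abs_mul, abs_of_pos hEx]
        exact mul_le_mul_of_nonneg_right habs hEx.le
      have hstep1 : (freq lam N0 ((k:ℤ)-1) ^ alpha * u s (k-1) * u s k)
            * Real.exp (c * (s - τ k)) ≤ 9/2*c*δ*(Es*Es) := by
        calc (freq lam N0 ((k:ℤ)-1) ^ alpha * u s (k-1) * u s k) * Real.exp (c * (s - τ k))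
            ≤ (9/2*c*δ*(Es*Es)*Es) * Real.exp (c * (s - τ k)) :=
              mul_le_mul_of_nonneg_right hT1 hEx.le
          _ = 9/2*c*δ*(Es*Es) * (Real.exp (c * (s - τ k)) * Es) := by ring
          _ = 9/2*c*δ*(Es*Es) := by rw [hEe, mul_one]
      have hstep2 : (freq lam N0 (k:ℤ) ^ alpha * (u s (k+1))^2)
            * Real.exp (c * (s - τ k)) ≤ 1/2*c*δ*(Es*Es) := by
        calc (freq lam N0 (k:ℤ) ^ alpha * (u s (k+1))^2) * Real.exp (c * (s - τ k))
            ≤ (freq lam N0 (k:ℤ) ^ alpha * (3*δ2*Real.exp (-(2*(c2*(s - τ (k+2))))))^2)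
                * Real.exp (c * (s - τ k)) := mul_le_mul_of_nonneg_right hT2 hEx.le
          _ ≤ 1/2*c*δ*(Es^2) := hkeys
          _ = 1/2*c*δ*(Es*Es) := by ring
      have hEssplit : Es*Es = E0^2 * Real.exp (-(2*c*(s - t0))) := by
        rw [hEsdef, hE0def, hSkdef, sq, ← Real.exp_add, ← Real.exp_add, ← Real.exp_add]
        congr 1; ring
      calc |g' s| ≤ (freq lam N0 ((k:ℤ)-1) ^ alpha * u s (k-1) * u s k
            + freq lam N0 (k:ℤ) ^ alpha * (u s (k+1))^2) * Real.exp (c * (s - τ k)) := hgabs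
        _ = (freq lam N0 ((k:ℤ)-1) ^ alpha * u s (k-1) * u s k) * Real.exp (c * (s - τ k))
            + (freq lam N0 (k:ℤ) ^ alpha * (u s (k+1))^2) * Real.exp (c * (s - τ k)) := by
            ring
        _ ≤ 9/2*c*δ*(Es*Es) + 1/2*c*δ*(Es*Es) := add_le_add hstep1 hstep2
        _ = 5*c*δ*(Es*Es) := by ring
        _ = (5*c*δ*E0^2) * Real.exp (-(2*c*(s - t0))) := by rw [hEssplit]; ring
    -- initial value of g
    have hgt0 : g t0 = δ := by
      have hi := hinit k hk
      rw [← hcdef, ← hδdef] at hi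
      simp only [hgdef]
      rw [hi, mul_assoc, ← Real.exp_add,
        show -c*(t0 - τ k) + c*(t0 - τ k) = 0 by ring, Real.exp_zero, mul_one]
    -- the ODE estimate
    have hODE : ∀ t ∈ Ici t0, |u t k - δ * Real.exp (-(c*(t - τ k)))|
        ≤ (5/2*E0^2) * (δ * Real.exp (-(c*(t - τ k)))) := by
      intro t ht
      have hM0 : (0:ℝ) ≤ 5*c*δ*E0^2 := mul_nonneg (mul_nonneg (by linarith only [hc]) hδ.le) (sq_nonneg E0)
      have h := aux_decay hc hM0 hg hgb ht
      rw [hgt0] at h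
      have hMdiv : (5*c*δ*E0^2)/(2*c) = 5/2*δ*E0^2 := by
        field_simp
      rw [hMdiv] at h
      set Et := Real.exp (-(c*(t - τ k))) with hEtdef
      have hEe : Real.exp (c*(t - τ k)) * Et = 1 := by
        rw [hEtdef, ← Real.exp_add]; simp
      have heq : u t k - δ*Et = (g t - δ)*Et := by
        simp only [hgdef]
        rw [sub_mul, mul_assoc, hEe, mul_one]
      rw [heq, abs_mul, abs_of_pos (Real.exp_pos _)]
      calc |g t - δ| * Et ≤ (5/2*δ*E0^2) * Et :=
            mul_le_mul_of_nonneg_right h (Real.exp_pos _).le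
        _ = 5/2*E0^2 * (δ*Et) := by ring
    -- per-time bounds
    have base : ∀ t ∈ Ici t0,
        0 < u t k ∧
        |rGood lam N0 alpha (u t) k - 1| ≤ 9*(Real.exp (-(c*(t - τ k))))^2 ∧
        |zGood lam N0 alpha (u t) k - Real.exp (-(c*(t - τ k)))/2|
          ≤ Real.exp (-(c*(t - τ k)))*(3*(5/2*E0^2) + 90*(Real.exp (-(c*(t - τ k))))^2) := by
      intro t ht
      obtain ⟨hb1, hb2⟩ := hbd k hk t ht
      rw [← hcdef, ← hδdef] at hb1 hb2
      set Et := Real.exp (-(c*(t - τ k))) with hEtdef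
      have hEtpos : 0 < Et := Real.exp_pos _
      have hEtle : Et ≤ E0 := by
        rw [hEtdef, hE0def]
        apply Real.exp_le_exp.mpr
        rw [hSkdef]
        have hmul := mul_le_mul_of_nonneg_left (mem_Ici.mp ht) hc.le
        linarith only [hmul]
      have hEt10 : Et ≤ 1/10 := by linarith only [hEtle, hE0le]
      rw [show -(2*c)*(t - τ k) = -(c*(t - τ k)) + -(c*(t - τ k)) by ring, Real.exp_add,
        ← hEtdef] at hb1
      rw [show -c*(t - τ k) = -(c*(t - τ k)) by ring, ← hEtdef] at hb2
      have hx0 : 0 ≤ u t (k-1)/δ := div_nonneg (hupos (k-1) t ht) hδ.le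
      have hx : u t (k-1)/δ ≤ 3*Et^2 := by
        rw [div_le_iff₀ hδ]
        calc u t (k-1) ≤ 3*δ*(Et*Et) := hb1
          _ = 3*Et^2*δ := by ring
      have hy : |u t k/δ - Et| ≤ (5/2*E0^2)*Et := by
        have h := hODE t ht
        rw [← hEtdef] at h
        rw [show u t k/δ - Et = (u t k - δ*Et)/δ by field_simp, abs_div, abs_of_pos hδ,
          div_le_iff₀ hδ]
        calc |u t k - δ*Et| ≤ 5/2*E0^2 * (δ*Et) := h
          _ = (5/2*E0^2)*Et*δ := by ring
      have hupos' : 0 < u t k := by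
        rw [abs_le] at hb2; nlinarith only [mul_pos hδ hEtpos, hb2.1]
      have hrg : |rGood lam N0 alpha (u t) k - 1| ≤ 9*Et^2 := by
        have h := aux_r_bound hEtpos hEt10 hε0 hεhalf hx0 hx hy
        unfold rGood
        rw [← hδdef]
        exact h
      have hzg : |zGood lam N0 alpha (u t) k - Et/2| ≤ Et*(3*(5/2*E0^2) + 90*Et^2) := by
        have h := aux_z_bound hEtpos hEt10 hε0 hεhalf hx0 hx hy
        have hzeq : zGood lam N0 alpha (u t) k
            = ((Real.sqrt ((u t (k-1)/δ - 1)^2 + (u t k/δ)^2) - 1) + u t (k-1)/δ)/(u t k/δ) := by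
          unfold zGood rGood
          rw [← hδdef]
          rw [div_eq_div_iff hupos'.ne' (div_pos hupos' hδ).ne']
          field_simp
          try ring
        rw [hzeq]
        exact h
      exact ⟨hupos', hrg, hzg⟩
    refine ⟨fun t ht => (base t ht).1, ?_, ?_⟩
    · -- weighted bound
      intro t ht
      obtain ⟨hupos', hrg, hzg⟩ := base t ht
      set Et := Real.exp (-(c*(t - τ k))) with hEtdef
      have hEtpos : 0 < Et := Real.exp_pos _
      have hEtle : Et ≤ E0 := by
        rw [hEtdef, hE0def]
        apply Real.exp_le_exp.mpr
        rw [hSkdef]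
        have hmul := mul_le_mul_of_nonneg_left (mem_Ici.mp ht) hc.le
        linarith only [hmul]
      rw [show -c * (t - τ k) = -(c*(t - τ k)) by ring, ← hEtdef,
        show (1:ℝ)/2 * Et = Et/2 by ring]
      have hwr0 : 0 ≤ wr lam N0 alpha τ k t :=
        le_trans (Real.rpow_pos_of_pos hlam0 _).le (le_max_left _ _)
      have hwrE : wr lam N0 alpha τ k t * Et^2 ≤ 1 := by
        unfold wr
        rw [← hcdef, max_mul_of_nonneg _ _ (sq_nonneg Et)]
        apply max_le
        · have h1 : lam ^ ((4-alpha)/2) ≤ lam := by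
            calc lam ^ ((4-alpha)/2) ≤ lam ^ (1:ℝ) := by
                  rw [Real.rpow_le_rpow_left_iff hlam1]; linarith only [hα2]
              _ = lam := Real.rpow_one lam
          have h2 : Et^2 ≤ Real.exp (-(2*Sk)) := by
            rw [hEtdef, sq, ← Real.exp_add]
            apply Real.exp_le_exp.mpr
            rw [hSkdef]
            have hmul := mul_le_mul_of_nonneg_left (mem_Ici.mp ht) hc.le
            linarith only [hmul]
          have h3 : lam = Real.exp L := (Real.exp_log hlam0).symm
          calc lam ^ ((4-alpha)/2) * Et^2 ≤ lam * Real.exp (-(2*Sk)) :=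
                mul_le_mul h1 h2 (by positivity) hlam0.le
            _ = Real.exp (L + -(2*Sk)) := by rw [h3, ← Real.exp_add]
            _ ≤ 1 := Real.exp_le_one_iff.mpr (by linarith only [hSL, hS30])
        · apply le_of_eq
          rw [hEtdef, sq, ← Real.exp_add, ← Real.exp_add]
          rw [show 2*c*(t - τ k) + (-(c*(t - τ k)) + -(c*(t - τ k))) = 0 by ring]
          exact Real.exp_zero
      have hwrterm : wr lam N0 alpha τ k t * |rGood lam N0 alpha (u t) k - 1| ≤ 9 := by
        calc wr lam N0 alpha τ k t * |rGood lam N0 alpha (u t) k - 1|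
            ≤ wr lam N0 alpha τ k t * (9*Et^2) := mul_le_mul_of_nonneg_left hrg hwr0
          _ = 9*(wr lam N0 alpha τ k t * Et^2) := by ring
          _ ≤ 9 := by linarith only [hwrE]
      have hwzterm : wz lam N0 τ k t * |zGood lam N0 alpha (u t) k - Et/2| ≤ 1 := by
        unfold wz
        rw [← hcdef]
        have hEe : Real.exp (c*(t - τ k)) * Et = 1 := by
          rw [hEtdef, ← Real.exp_add]; simp
        calc 30*Real.exp (c*(t - τ k)) * |zGood lam N0 alpha (u t) k - Et/2|
            ≤ 30*Real.exp (c*(t - τ k)) * (Et*(3*(5/2*E0^2) + 90*Et^2)) := by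
              apply mul_le_mul_of_nonneg_left hzg (by positivity)
          _ = 30*(3*(5/2*E0^2) + 90*Et^2) * (Real.exp (c*(t - τ k)) * Et) := by ring
          _ = 30*(3*(5/2*E0^2) + 90*Et^2) := by rw [hEe, mul_one]
          _ ≤ 1 := by
              have hEt2 : Et^2 ≤ E0^2 := pow_le_pow_left₀ hEtpos.le hEtle 2
              linarith only [hE0sq, hEt2]
      linarith only [hwrterm, hwzterm]
    · -- refined bound at t0
      have ht0m : t0 ∈ Ici t0 := mem_Ici.mpr le_rfl
      obtain ⟨hupos', hrg0, hzg0⟩ := base t0 ht0m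
      -- redo z bound with eps = 0
      have hi := hinit k hk
      rw [← hcdef, ← hδdef] at hi
      set Et := Real.exp (-(c*(t0 - τ k))) with hEtdef
      have hEtpos : 0 < Et := Real.exp_pos _
      have hEteq : Et = E0 := by
        simp only [hEtdef, hE0def, hSkdef]
      have hEt10 : Et ≤ 1/10 := by rw [hEteq]; linarith only [hE0le]
      obtain ⟨hb1, hb2⟩ := hbd k hk t0 ht0m
      rw [← hcdef, ← hδdef] at hb1
      rw [show -(2*c)*(t0 - τ k) = -(c*(t0 - τ k)) + -(c*(t0 - τ k)) by ring, Real.exp_add,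
        ← hEtdef] at hb1
      have hx0 : 0 ≤ u t0 (k-1)/δ := div_nonneg (hupos (k-1) t0 ht0m) hδ.le
      have hx : u t0 (k-1)/δ ≤ 3*Et^2 := by
        rw [div_le_iff₀ hδ]
        calc u t0 (k-1) ≤ 3*δ*(Et*Et) := hb1
          _ = 3*Et^2*δ := by ring
      have hy : |u t0 k/δ - Et| ≤ 0*Et := by
        rw [show -c*(t0 - τ k) = -(c*(t0 - τ k)) by ring, ← hEtdef] at hi
        rw [hi, mul_comm δ Et, mul_div_assoc, div_self hδ.ne', mul_one]
        simp
      have h := aux_z_bound hEtpos hEt10 le_rfl (by norm_num) hx0 hx hy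
      have hzeq : zGood lam N0 alpha (u t0) k
          = ((Real.sqrt ((u t0 (k-1)/δ - 1)^2 + (u t0 k/δ)^2) - 1) + u t0 (k-1)/δ)/(u t0 k/δ) := by
        unfold zGood rGood
        rw [← hδdef]
        rw [div_eq_div_iff hupos'.ne' (div_pos hupos' hδ).ne']
        field_simp
        try ring
      rw [show -c * (t0 - τ k) = -(c*(t0 - τ k)) by ring, ← hEtdef,
        show (1:ℝ)/2 * Et = Et/2 by ring, hzeq]
      have hcube : Real.exp (-(3*c) * (t0 - τ k)) = Et^3 := by
        rw [hEtdef, ← Real.exp_nat_mul]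
        congr 1
        push_cast
        ring
      rw [hcube]
      calc |((Real.sqrt ((u t0 (k-1)/δ - 1)^2 + (u t0 k/δ)^2) - 1) + u t0 (k-1)/δ)/(u t0 k/δ)
            - Et/2| ≤ Et*(3*0 + 90*Et^2) := h
        _ = 90*Et^3 := by ring
        _ ≤ 100*Et^3 := by nlinarith only [pow_pos hEtpos 3]
  constructor
  · exact ⟨fun k hk => (key k hk).1, fun k hk t ht => (key k hk).2.1 t ht⟩
  · exact fun k hk => (key k hk).2.2

end
end

section
/- Let α ∈ (2,4). There exists λ₀ > 1 depending only on α such that for all λ ≥ λ₀, N₀ > 0, σ ∈ {1,2}, admissible delays (τ_k)_{k∈2ℕ+σ}, and any reference solution ū, the set { t ∈ [0,t₀] : there exists a function u obeying the strong bootstrap hypothesis H′(t) } is a closed subset of [0,t₀]. -/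
open Set MeasureTheory
open scoped ENNReal BigOperators

noncomputable section

/-- A reference solution for parity `σ` and delays `τ` (the solution produced on
`[t₀,∞)` by the stable-manifold construction). -/
def RefSolution (lam N0 alpha : ℝ) (σ : ℕ) (τ : ℕ → ℝ) (u : ℝ → ℕ → ℝ) : Prop :=
  IsObukhovSolutionOn lam N0 alpha u (Ici (tInit lam N0 alpha)) ∧
  (∀ k : ℕ, ∀ t ∈ Ici (tInit lam N0 alpha), 0 ≤ u t k) ∧
  (∀ k ∈ shell σ, ∀ t ∈ Ici (tInit lam N0 alpha),
    u t (k - 1) ≤ 3 * amp lam N0 alpha (k : ℤ)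
        * Real.exp (-(2 * freq lam N0 (k : ℤ) ^ 2) * (t - τ k)) ∧
    |u t k - amp lam N0 alpha (k : ℤ)
        * Real.exp (-(freq lam N0 (k : ℤ) ^ 2) * (t - τ k))|
      ≤ 1 / 2 * amp lam N0 alpha (k : ℤ)
          * Real.exp (-(freq lam N0 (k : ℤ) ^ 2) * (t - τ k))) ∧
  (∀ k ∈ shell σ,
    u (tInit lam N0 alpha) k
      = amp lam N0 alpha (k : ℤ)
          * Real.exp (-(freq lam N0 (k : ℤ) ^ 2) * (tInit lam N0 alpha - τ k))) ∧
  (σ = 2 → ∀ t ∈ Ici (tInit lam N0 alpha),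
    1 / 4 * amp lam N0 alpha 1
        * Real.exp (-(freq lam N0 0 ^ 2) * (t - tInit lam N0 alpha)) ≤ u t 0 ∧
    u t 0 ≤ 2 * amp lam N0 alpha 1
        * Real.exp (-(freq lam N0 0 ^ 2) * (t - tInit lam N0 alpha)))

/-- Weak bootstrap hypothesis `H(t)` relative to the reference solution `ubar`. -/
def WeakH (lam N0 alpha : ℝ) (σ : ℕ) (τ : ℕ → ℝ) (ubar u : ℝ → ℕ → ℝ) (t : ℝ) : Prop :=
  IsObukhovSolutionOn lam N0 alpha u (Ici t) ∧
  (∀ s ∈ Ici (tInit lam N0 alpha), ∀ k : ℕ, u s k = ubar s k) ∧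
  GoodInBall lam N0 alpha σ τ u (Icc t (tInit lam N0 alpha)) 10

/-- Strong bootstrap hypothesis `H'(t)`. -/
def StrongH (lam N0 alpha : ℝ) (σ : ℕ) (τ : ℕ → ℝ) (ubar u : ℝ → ℕ → ℝ) (t : ℝ) : Prop :=
  WeakH lam N0 alpha σ τ ubar u t ∧
  GoodInBall lam N0 alpha σ τ u (Icc t (tInit lam N0 alpha)) (1 / 100)

/-! ### Auxiliary lemmas for the proof -/

private theorem myftc (a b : ℝ) (hab : a ≤ b) (f g : ℝ → ℝ)
    (hd : ∀ x ∈ Icc a b, HasDerivWithinAt f (g x) (Icc a b) x)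
    (hc : ContinuousOn g (Icc a b)) :
    ∫ y in a..b, g y = f b - f a := by
  apply intervalIntegral.integral_eq_sub_of_hasDeriv_right_of_le hab
    (fun x hx => (hd x hx).continuousWithinAt)
  · intro x hx
    exact ((hd x (Ioo_subset_Icc_self hx)).hasDerivAt (Icc_mem_nhds hx.1 hx.2)).hasDerivWithinAt
  · exact (hc.mono (by rw [uIcc_of_le hab])).intervalIntegrable

private theorem mylip (a b M : ℝ) (f g : ℝ → ℝ)
    (hd : ∀ x ∈ Icc a b, HasDerivWithinAt f (g x) (Icc a b) x)
    (hc : ContinuousOn g (Icc a b))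
    (hM : ∀ x ∈ Icc a b, |g x| ≤ M) :
    ∀ s1 ∈ Icc a b, ∀ s2 ∈ Icc a b, |f s2 - f s1| ≤ M * |s2 - s1| := by
  have key : ∀ s1 ∈ Icc a b, ∀ s2 ∈ Icc a b, s1 ≤ s2 → |f s2 - f s1| ≤ M * |s2 - s1| := by
    intro s1 h1 s2 h2 h12
    have hsub : Icc s1 s2 ⊆ Icc a b := Icc_subset_Icc h1.1 h2.2
    have heq : ∫ y in s1..s2, g y = f s2 - f s1 :=
      myftc s1 s2 h12 f g (fun x hx => (hd x (hsub hx)).mono hsub) (hc.mono hsub)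
    rw [← heq]
    have hnorm := intervalIntegral.norm_integral_le_of_norm_le_const
      (C := M) (f := g) (a := s1) (b := s2) ?_
    · simpa [Real.norm_eq_abs] using hnorm
    · intro x hx
      rw [Set.uIoc_of_le h12] at hx
      simpa [Real.norm_eq_abs] using hM x (hsub ⟨hx.1.le, hx.2⟩)
  intro s1 h1 s2 h2
  rcases le_total s1 s2 with h | h
  · exact key s1 h1 s2 h2 h
  · rw [abs_sub_comm (f s2), abs_sub_comm s2]
    exact key s2 h2 s1 h1 h

private theorem abs3 (x y z : ℝ) : |x + y - z| ≤ |x| + |y| + |z| := by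
  rw [sub_eq_add_neg]
  refine (abs_add_le _ _).trans ?_
  rw [abs_neg]
  exact add_le_add (abs_add_le x y) le_rfl

private theorem obukhov_rhs_bound (lam N0 alpha : ℝ) (hlam : 0 < lam) (hN0 : 0 < N0)
    (k : ℕ) (C : ℕ → ℝ) (u : ℕ → ℝ)
    (h1 : |u (k-1)| ≤ C (k-1)) (h2 : |u k| ≤ C k) (h3 : |u (k+1)| ≤ C (k+1)) :
    |obukhovRHS lam N0 alpha u k| ≤
      freq lam N0 (k:ℤ)^2 * C k + freq lam N0 ((k:ℤ)-1)^alpha * (C (k-1) * C k)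
        + freq lam N0 (k:ℤ)^alpha * C (k+1)^2 := by
  have hf : ∀ m : ℤ, 0 < freq lam N0 m := fun m => mul_pos (zpow_pos hlam m) hN0
  have hC1 : 0 ≤ C (k-1) := le_trans (abs_nonneg _) h1
  have hC2 : 0 ≤ C k := le_trans (abs_nonneg _) h2
  have hC3 : 0 ≤ C (k+1) := le_trans (abs_nonneg _) h3
  unfold obukhovRHS
  refine (abs3 _ _ _).trans (add_le_add (add_le_add ?_ ?_) ?_)
  · rw [abs_mul, abs_neg, abs_of_pos (pow_pos (hf _) 2)]
    exact mul_le_mul_of_nonneg_left h2 (pow_pos (hf _) 2).le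
  · by_cases hk : k = 0
    · subst hk
      simp only [if_true, abs_zero]
      exact mul_nonneg (Real.rpow_pos_of_pos (hf _) _).le (mul_nonneg hC1 hC2)
    · simp only [hk, if_false]
      rw [mul_assoc, abs_mul, abs_of_pos (Real.rpow_pos_of_pos (hf _) _)]
      refine mul_le_mul_of_nonneg_left ?_ (Real.rpow_pos_of_pos (hf _) _).le
      rw [abs_mul]
      exact mul_le_mul h1 h2 (abs_nonneg _) hC1
  · rw [abs_mul, abs_of_pos (Real.rpow_pos_of_pos (hf _) _), abs_pow]
    refine mul_le_mul_of_nonneg_left ?_ (Real.rpow_pos_of_pos (hf _) _).le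
    exact pow_le_pow_left₀ (abs_nonneg _) h3 2

private theorem obukhov_rhs_continuousOn (lam N0 alpha : ℝ) (k : ℕ) (v : ℝ → ℕ → ℝ) (S : Set ℝ)
    (h : ∀ j, ContinuousOn (fun s => v s j) S) :
    ContinuousOn (fun s => obukhovRHS lam N0 alpha (v s) k) S := by
  unfold obukhovRHS
  refine ContinuousOn.sub (ContinuousOn.add (continuousOn_const.mul (h k)) ?_)
    (continuousOn_const.mul ((h (k+1)).pow 2))
  by_cases hk : k = 0
  · simp only [hk, if_true]; exact continuousOn_const
  · simp only [hk, if_false]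
    exact (continuousOn_const.mul (h (k-1))).mul (h k)

private theorem obukhov_rhs_tendsto (lam N0 alpha : ℝ) (k : ℕ) (x : ℕ → ℕ → ℝ) (y : ℕ → ℝ)
    (h : ∀ j, Filter.Tendsto (fun i => x i j) Filter.atTop (nhds (y j))) :
    Filter.Tendsto (fun i => obukhovRHS lam N0 alpha (x i) k) Filter.atTop
      (nhds (obukhovRHS lam N0 alpha y k)) := by
  unfold obukhovRHS
  refine Filter.Tendsto.sub (Filter.Tendsto.add (Filter.Tendsto.const_mul _ (h k)) ?_)
    (Filter.Tendsto.const_mul _ ((h (k+1)).pow 2))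
  by_cases hk : k = 0
  · simp only [hk, if_true]; exact tendsto_const_nhds
  · simp only [hk, if_false]
    exact ((Filter.Tendsto.const_mul _ (h (k-1))).mul (h k))

private theorem decode (δ uk1 uk w X : ℝ) (hδ : 0 < δ) (huk : 0 < uk) (hw : 1 ≤ w)
    (h : w * |Real.sqrt ((uk1/δ-1)^2 + (uk/δ)^2) - 1|
      + 30 * Real.exp X *
        |(δ*(Real.sqrt ((uk1/δ-1)^2 + (uk/δ)^2) - 1) + uk1)/uk - 1/2 * Real.exp (-X)| ≤ 1/100) :
    uk ≤ (101/100)*δ ∧ |uk1 - δ| ≤ (101/100)*δ ∧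
      δ * (2*(99/100)*((1/2-1/3000)*Real.exp (-X)))
        / (1 + ((1/2+1/3000)*Real.exp (-X))^2) ≤ uk := by
  set a := uk1/δ - 1 with ha
  set b := uk/δ with hb
  set r := Real.sqrt (a^2 + b^2) with hr
  set z := (δ*(r-1) + uk1)/uk with hz
  set E := Real.exp (-X) with hEdef
  have hE0 : 0 < E := Real.exp_pos _
  have hr0 : 0 ≤ r := Real.sqrt_nonneg _
  have hb0 : 0 < b := div_pos huk hδ
  have hrsq : r^2 = a^2 + b^2 := by rw [hr]; exact Real.sq_sqrt (by positivity)
  have hzb : z * b = r + a := by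
    rw [hz, hb, ha]; field_simp; ring
  have hbub : uk = b * δ := by rw [hb]; field_simp
  have e : uk1 - δ = a * δ := by rw [ha]; field_simp
  have e4 : (1/100) / (30*Real.exp X) = 1/3000 * E := by
    rw [hEdef, Real.exp_neg]; ring
  clear_value a b r z E
  have hw0 : (0:ℝ) ≤ w * |r - 1| :=
    mul_nonneg (le_trans zero_le_one hw) (abs_nonneg _)
  have hz0' : (0:ℝ) ≤ 30 * Real.exp X * |z - 1/2*E| :=
    mul_nonneg (by positivity) (abs_nonneg _)
  have h1 : |r - 1| ≤ 1/100 := by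
    have e1 : |r-1| ≤ w*|r-1| := le_mul_of_one_le_left (abs_nonneg _) hw
    linarith
  have h2 : |z - 1/2 * E| ≤ 1/3000 * E := by
    have hEp := Real.exp_pos X
    have e2 : 30 * Real.exp X * |z - 1/2 * E| ≤ 1/100 := by linarith
    have e3 : |z - 1/2*E| ≤ (1/100) / (30*Real.exp X) := by
      rw [le_div_iff₀ (by positivity), mul_comm]; exact e2
    linarith [e3, e4.le]
  have hr101 : r ≤ 101/100 := by have := abs_le.1 h1; linarith
  have hrl : 99/100 ≤ r := by have := abs_le.1 h1; linarith
  have hrsq101 : r^2 ≤ (101/100)^2 := by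
    have := pow_le_pow_left₀ hr0 hr101 2
    simpa using this
  have hbb : b^2 ≤ (101/100)^2 := by linarith [sq_nonneg a]
  have haa : a^2 ≤ (101/100)^2 := by linarith [sq_nonneg b]
  have hb' : b ≤ 101/100 := (abs_le_of_sq_le_sq' hbb (by norm_num)).2
  have ha' : |a| ≤ 101/100 :=
    abs_le.2 ⟨(abs_le_of_sq_le_sq' haa (by norm_num)).1, (abs_le_of_sq_le_sq' haa (by norm_num)).2⟩
  refine ⟨?_, ?_, ?_⟩
  · rw [hbub]; exact mul_le_mul_of_nonneg_right hb' hδ.le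
  · rw [e, abs_mul, abs_of_pos hδ]
    exact mul_le_mul_of_nonneg_right ha' hδ.le
  · set zl := (1/2 - 1/3000)*E with hzl'
    set zh := (1/2 + 1/3000)*E with hzh'
    have hzl0 : 0 < zl := by rw [hzl']; positivity
    have hzh0 : 0 < zh := by rw [hzh']; positivity
    have hzlz : zl ≤ z := by have := abs_le.1 h2; rw [hzl']; linarith
    have hzzh : z ≤ zh := by have := abs_le.1 h2; rw [hzh']; linarith
    clear_value zl zh
    have h3 : z^2*b^2 + b^2 = 2*z*b*r := by
      linear_combination (z*b - r + a) * hzb - hrsq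
    have hkey : b*(1+z^2) = 2*r*z := by
      apply mul_left_cancel₀ (ne_of_gt hb0)
      linear_combination h3
    have hz0 : 0 < z := lt_of_lt_of_le hzl0 hzlz
    have hden : (0:ℝ) < 1 + zh^2 := by positivity
    rw [hbub, div_le_iff₀ hden]
    have h99 : (99/100)*zl ≤ r*z := mul_le_mul hrl hzlz hzl0.le hr0
    have hsq : z^2 ≤ zh^2 := sq_le_sq' (by linarith) hzzh
    have step2 : b*(1+z^2) ≤ b*(1+zh^2) :=
      mul_le_mul_of_nonneg_left (by linarith) hb0.le
    calc δ*(2*(99/100)*zl) = δ*2*((99/100)*zl) := by ring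
      _ ≤ δ*2*(r*z) := mul_le_mul_of_nonneg_left h99 (by positivity)
      _ = δ*(2*r*z) := by ring
      _ = δ*(b*(1+z^2)) := by rw [hkey]
      _ ≤ δ*(b*(1+zh^2)) := mul_le_mul_of_nonneg_left step2 hδ.le
      _ = b*δ*(1+zh^2) := by ring

private theorem cont_of_lip (M : ℝ) (f : ℝ → ℝ)
    (h : ∀ x y : ℝ, |f y - f x| ≤ M * |y - x|) : Continuous f := by
  have : LipschitzWith (Real.toNNReal M) f := by
    apply LipschitzWith.of_dist_le_mul
    intro x y
    rw [Real.dist_eq, Real.dist_eq]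
    refine (h y x).trans (mul_le_mul_of_nonneg_right ?_ (abs_nonneg _))
    exact Real.le_coe_toNNReal M
  exact this.continuous

private theorem gronwall0 (lam N0 alpha : ℝ) (hlam : 0 < lam) (hN0 : 0 < N0)
    (a b : ℝ) (hab : a ≤ b) (u : ℝ → ℕ → ℝ)
    (hsol : ∀ x ∈ Icc a b, HasDerivWithinAt (fun s => u s 0)
      (obukhovRHS lam N0 alpha (u x) 0) (Icc a b) x)
    (hcont1 : ContinuousOn (fun s => u s 1) (Icc a b))
    (B : ℝ) (hB : ∀ x ∈ Icc a b, |u x 1| ≤ B) (h0 : 0 ≤ u b 0) :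
    ∀ s ∈ Icc a b, 0 ≤ u s 0 ∧
      u s 0 ≤ (u b 0 + freq lam N0 0 ^ alpha * B^2 * (b - a)) *
        Real.exp (freq lam N0 0 ^ 2 * (b - s)) := by
  set c := freq lam N0 0 with hc
  have hc2 : 0 < c := mul_pos (zpow_pos hlam _) hN0
  have hca : 0 < c ^ alpha := Real.rpow_pos_of_pos hc2 _
  have hB0 : 0 ≤ B := le_trans (abs_nonneg _) (hB a ⟨le_rfl, hab⟩)
  set g : ℝ → ℝ := fun x => u x 0 * Real.exp (c^2 * x) with hgdef
  set G : ℝ → ℝ := fun x => -(c^alpha) * (u x 1)^2 * Real.exp (c^2 * x) with hGdef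
  have hgd : ∀ x ∈ Icc a b, HasDerivWithinAt g (G x) (Icc a b) x := by
    intro x hx
    have h1 := hsol x hx
    have hexp : HasDerivAt (fun y : ℝ => Real.exp (c^2 * y)) (Real.exp (c^2*x) * c^2) x := by
      simpa using (HasDerivAt.exp ((hasDerivAt_id x).const_mul (c^2)))
    have h2 := h1.mul (hexp.hasDerivWithinAt)
    convert h2 using 1
    show G x = obukhovRHS lam N0 alpha (u x) 0 * Real.exp (c^2*x) + u x 0 * (Real.exp (c^2*x) * c^2)
    rw [hGdef]
    show -(c^alpha) * (u x 1)^2 * Real.exp (c^2 * x) = _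
    have : obukhovRHS lam N0 alpha (u x) 0
        = -(c^2) * u x 0 - c^alpha * (u x 1)^2 := by
      unfold obukhovRHS
      norm_num [hc]
    rw [this]
    ring
    all_goals rfl
  have hGcont : ContinuousOn G (Icc a b) :=
    (continuousOn_const.mul (hcont1.pow 2)).mul
      ((Real.continuous_exp.comp (continuous_const.mul continuous_id)).continuousOn)
  intro s hs
  have hsub : Icc s b ⊆ Icc a b := Icc_subset_Icc hs.1 le_rfl
  have hftc : ∫ y in s..b, G y = g b - g s :=
    myftc s b hs.2 g G (fun x hx => (hgd x (hsub hx)).mono hsub) (hGcont.mono hsub)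
  have hEs : 0 < Real.exp (c^2*s) := Real.exp_pos _
  have hEb : 0 < Real.exp (c^2*b) := Real.exp_pos _
  -- integral ≤ 0
  have hile : ∫ y in s..b, G y ≤ 0 := by
    have h1 : 0 ≤ ∫ y in s..b, -G y := by
      apply intervalIntegral.integral_nonneg hs.2
      intro x hx
      have : 0 ≤ c^alpha * (u x 1)^2 * Real.exp (c^2*x) := by positivity
      rw [hGdef]; dsimp only; nlinarith [this]
    rw [intervalIntegral.integral_neg] at h1
    linarith
  have hgb0 : 0 ≤ g b := mul_nonneg h0 hEb.le
  have hgs0 : 0 ≤ g s := by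
    have : g b - g s ≤ 0 := by rw [← hftc]; exact hile
    linarith
  have hu0 : 0 ≤ u s 0 :=
    (mul_nonneg_iff_of_pos_right hEs).1 hgs0
  refine ⟨hu0, ?_⟩
  -- integral lower bound
  have hibd : ‖∫ y in s..b, G y‖ ≤ c^alpha * B^2 * Real.exp (c^2*b) * |b - s| := by
    apply intervalIntegral.norm_integral_le_of_norm_le_const
    intro x hx
    rw [Set.uIoc_of_le hs.2] at hx
    have hx' : x ∈ Icc a b := hsub ⟨hx.1.le, hx.2⟩
    have hxb : x ≤ b := hx.2
    have hexple : Real.exp (c^2*x) ≤ Real.exp (c^2*b) := by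
      apply Real.exp_le_exp.2
      have := sq_nonneg c
      nlinarith
    have hub : (u x 1)^2 ≤ B^2 := by
      rw [← sq_abs]
      exact pow_le_pow_left₀ (abs_nonneg _) (hB x hx') 2
    rw [hGdef]
    dsimp only
    rw [Real.norm_eq_abs, abs_mul, abs_mul, abs_neg, abs_of_pos hca,
      abs_of_nonneg (sq_nonneg _), abs_of_pos (Real.exp_pos _)]
    have e1 : c^alpha * (u x 1)^2 ≤ c^alpha * B^2 :=
      mul_le_mul_of_nonneg_left hub hca.le
    exact mul_le_mul e1 hexple (Real.exp_pos _).le (by positivity)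
  have habs : |b - s| = b - s := abs_of_nonneg (by linarith [hs.2])
  have hgsb : g s ≤ g b + c^alpha * B^2 * Real.exp (c^2*b) * (b - s) := by
    have h2 : -(c^alpha * B^2 * Real.exp (c^2*b) * (b-s)) ≤ ∫ y in s..b, G y := by
      have := (abs_le.1 (by rwa [Real.norm_eq_abs, habs] at hibd)).1
      linarith
    rw [hftc] at h2
    linarith
  have hfin : u s 0 * Real.exp (c^2*s)
      ≤ (u b 0 + c^alpha * B^2 * (b-a)) * Real.exp (c^2*b) := by
    have h3 : c^alpha * B^2 * Real.exp (c^2*b) * (b-s)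
        ≤ c^alpha * B^2 * Real.exp (c^2*b) * (b-a) := by
      apply mul_le_mul_of_nonneg_left _ (by positivity)
      linarith [hs.1]
    have h4 : g s ≤ u b 0 * Real.exp (c^2*b) + c^alpha * B^2 * Real.exp (c^2*b) * (b-a) := by
      calc g s ≤ g b + c^alpha * B^2 * Real.exp (c^2*b) * (b-s) := hgsb
        _ ≤ g b + c^alpha * B^2 * Real.exp (c^2*b) * (b-a) := by linarith
        _ = u b 0 * Real.exp (c^2*b) + c^alpha * B^2 * Real.exp (c^2*b) * (b-a) := by rw [hgdef]
    calc u s 0 * Real.exp (c^2*s) = g s := by rw [hgdef]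
      _ ≤ u b 0 * Real.exp (c^2*b) + c^alpha * B^2 * Real.exp (c^2*b) * (b-a) := h4
      _ = (u b 0 + c^alpha * B^2 * (b-a)) * Real.exp (c^2*b) := by ring
  calc u s 0 = (u s 0 * Real.exp (c^2*s)) / Real.exp (c^2*s) := by field_simp
    _ ≤ ((u b 0 + c^alpha * B^2 * (b-a)) * Real.exp (c^2*b)) / Real.exp (c^2*s) := by
        exact div_le_div_of_nonneg_right hfin hEs.le  
    _ = (u b 0 + c^alpha * B^2 * (b-a)) * Real.exp (c^2*(b-s)) := by
        rw [show c^2*(b-s) = c^2*b - c^2*s from by ring, Real.exp_sub]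
        ring

private theorem hard_case (lam N0 alpha : ℝ) (hα2 : 2 < alpha) (hα4 : alpha < 4)
    (hlam : 2 ≤ lam) (hN0 : 0 < N0) (σ : ℕ) (hσ : σ = 1 ∨ σ = 2) (τ : ℕ → ℝ)
    (ubar : ℝ → ℕ → ℝ) (href : RefSolution lam N0 alpha σ τ ubar)
    (p : ℝ) (hp : p < tInit lam N0 alpha)
    (hS : ∀ s, p < s → s ≤ tInit lam N0 alpha →
      ∃ u, StrongH lam N0 alpha σ τ ubar u s) :
    ∃ u, StrongH lam N0 alpha σ τ ubar u p := by
  classical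
  set t0 := tInit lam N0 alpha with ht0
  have hlam1 : (1:ℝ) < lam := by linarith
  have hlam0 : (0:ℝ) < lam := by linarith
  have hfreq : ∀ m : ℤ, 0 < freq lam N0 m := fun m => mul_pos (zpow_pos hlam0 m) hN0
  have hamp : ∀ m : ℤ, 0 < amp lam N0 alpha m := fun m =>
    mul_pos (Real.rpow_pos_of_pos (hfreq _) _) (pow_pos (hfreq _) 2)
  have hwr1 : ∀ (k : ℕ) (x : ℝ), 1 ≤ wr lam N0 alpha τ k x := fun k x =>
    le_trans (Real.one_le_rpow hlam1.le (by linarith)) (le_max_left _ _)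
  -- decreasing sequence of times
  set tseq : ℕ → ℝ := fun n => p + (t0 - p) * (1/(n+1)) with htseqdef
  have htseq_gt : ∀ n : ℕ, p < tseq n := by
    intro n
    have h1 : 0 < (t0 - p) * (1/((n:ℝ)+1)) := mul_pos (by linarith) (by positivity)
    simp only [htseqdef]; linarith
  have htseq_le : ∀ n : ℕ, tseq n ≤ t0 := by
    intro n
    have h1 : (1:ℝ)/((n:ℝ)+1) ≤ 1 := by
      rw [div_le_one (by positivity)]; simp
    have h2 : (t0 - p) * (1/((n:ℝ)+1)) ≤ (t0 - p) * 1 :=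
      mul_le_mul_of_nonneg_left h1 (by linarith)
    simp only [htseqdef]; linarith
  have htseq_tendsto : Filter.Tendsto tseq Filter.atTop (nhds p) := by
    have h1 := tendsto_one_div_add_atTop_nhds_zero_nat (𝕜 := ℝ)
    have h2 := h1.const_mul (t0 - p)
    rw [mul_zero] at h2
    have h3 := (tendsto_const_nhds (x := p)).add h2
    rw [add_zero] at h3
    exact h3
  choose un hun using fun n => hS (tseq n) (htseq_gt n) (htseq_le n)
  -- shell structure
  have hshell_cover : ∀ j : ℕ, j ∈ shell σ ∨ (j+1) ∈ shell σ ∨ (j = 0 ∧ σ = 2) := by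
    intro j
    have h1 : j ∈ shell σ ↔ (σ ≤ j ∧ j % 2 = σ % 2) := Iff.rfl
    have h2 : (j+1) ∈ shell σ ↔ (σ ≤ j+1 ∧ (j+1) % 2 = σ % 2) := Iff.rfl
    rw [h1, h2]
    rcases hσ with rfl | rfl <;> omega
  have hshell_ge : ∀ k ∈ shell σ, 1 ≤ k := by
    intro k hk
    have h1 : σ ≤ k := hk.1
    rcases hσ with rfl | rfl <;> omega
  -- accessors
  have hsol : ∀ n, IsObukhovSolutionOn lam N0 alpha (un n) (Ici (tseq n)) :=
    fun n => (hun n).1.1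
  have hueq : ∀ n, ∀ s ∈ Ici t0, ∀ k, un n s k = ubar s k := fun n => (hun n).1.2.1
  have hpos : ∀ n, ∀ k ∈ shell σ, ∀ s ∈ Icc (tseq n) t0, 0 < un n s k :=
    fun n => (hun n).2.1
  have hball : ∀ n, ∀ k ∈ shell σ, ∀ s ∈ Icc (tseq n) t0,
      wr lam N0 alpha τ k s * |rGood lam N0 alpha (un n s) k - 1|
        + wz lam N0 τ k s * |zGood lam N0 alpha (un n s) k
          - 1 / 2 * Real.exp (-(freq lam N0 (k : ℤ) ^ 2) * (s - τ k))| ≤ 1/100 :=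
    fun n => (hun n).2.2
  -- lower bound function
  set lowb : ℕ → ℝ → ℝ := fun k s =>
    amp lam N0 alpha (k:ℤ) * (2*(99/100)*((1/2-1/3000)*Real.exp (-(freq lam N0 (k:ℤ)^2*(s - τ k)))))
      / (1 + ((1/2+1/3000)*Real.exp (-(freq lam N0 (k:ℤ)^2*(s - τ k))))^2) with hlowbdef
  have hlowb_pos : ∀ (k : ℕ) (s : ℝ), 0 < lowb k s := by
    intro k s
    apply div_pos
    · exact mul_pos (hamp _) (by positivity)
    · positivity
  have hlowb_cont : ∀ k : ℕ, Continuous (lowb k) := by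
    intro k
    apply Continuous.div
    · exact continuous_const.mul (continuous_const.mul (continuous_const.mul
        (Real.continuous_exp.comp ((continuous_const.mul ((continuous_id.sub continuous_const))).neg))))
    · exact continuous_const.add ((continuous_const.mul
        (Real.continuous_exp.comp ((continuous_const.mul ((continuous_id.sub continuous_const))).neg))).pow 2)
    · intro x
      positivity
  -- decoded bounds
  have hdec : ∀ n, ∀ k ∈ shell σ, ∀ s ∈ Icc (tseq n) t0,
      un n s k ≤ (101/100) * amp lam N0 alpha (k:ℤ) ∧
      |un n s (k-1) - amp lam N0 alpha (k:ℤ)| ≤ (101/100) * amp lam N0 alpha (k:ℤ) ∧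
      lowb k s ≤ un n s k := by
    intro n k hk s hs
    have h := hball n k hk s hs
    have hd := decode (amp lam N0 alpha (k:ℤ)) (un n s (k-1)) (un n s k)
      (wr lam N0 alpha τ k s) (freq lam N0 (k:ℤ)^2*(s - τ k)) (hamp _)
      (hpos n k hk s hs) (hwr1 k s) ?_
    · exact ⟨hd.1, hd.2.1, hd.2.2⟩
    · simpa [rGood, zGood, wz, neg_mul] using h
  -- uniform coordinate bounds
  have hCex : ∀ j : ℕ, ∃ Cj : ℝ, 0 < Cj ∧ ∀ n, ∀ s ∈ Icc (tseq n) t0, |un n s j| ≤ Cj := by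
    intro j
    rcases hshell_cover j with hj | hj | hj
    · refine ⟨(101/100) * amp lam N0 alpha (j:ℤ), mul_pos (by norm_num) (hamp _), ?_⟩
      intro n s hs
      rw [abs_of_pos (hpos n j hj s hs)]
      exact (hdec n j hj s hs).1
    · refine ⟨(201/100) * amp lam N0 alpha ((j+1 : ℕ):ℤ), mul_pos (by norm_num) (hamp _), ?_⟩
      intro n s hs
      have h1 := (hdec n (j+1) hj s hs).2.1
      rw [Nat.add_sub_cancel] at h1
      have h2 := abs_sub_abs_le_abs_sub (un n s j) (amp lam N0 alpha ((j+1 : ℕ):ℤ))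
      have h3 : |amp lam N0 alpha ((j+1 : ℕ):ℤ)| = amp lam N0 alpha ((j+1 : ℕ):ℤ) :=
        abs_of_pos (hamp _)
      linarith
    · obtain ⟨rfl, rfl⟩ := hj
      have h2shell : (2:ℕ) ∈ shell 2 := ⟨le_rfl, rfl⟩
      have hB : ∀ n, ∀ x ∈ Icc (tseq n) t0, |un n x 1| ≤ (201/100) * amp lam N0 alpha (2:ℤ) := by
        intro n x hx
        have h1 := (hdec n 2 h2shell x hx).2.1
        push_cast at h1
        have h2 := abs_sub_abs_le_abs_sub (un n x 1) (amp lam N0 alpha (2:ℤ))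
        have h3 : |amp lam N0 alpha (2:ℤ)| = amp lam N0 alpha (2:ℤ) := abs_of_pos (hamp _)
        norm_num at h1 ⊢
        linarith
      set B := (201/100) * amp lam N0 alpha (2:ℤ) with hBdef
      have hgron : ∀ n, ∀ s ∈ Icc (tseq n) t0, 0 ≤ un n s 0 ∧
          un n s 0 ≤ (un n t0 0 + freq lam N0 0 ^ alpha * B^2 * (t0 - tseq n)) *
            Real.exp (freq lam N0 0 ^ 2 * (t0 - s)) := by
        intro n
        apply gronwall0 lam N0 alpha hlam0 hN0 (tseq n) t0 (htseq_le n) (un n)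
        · intro x hx
          exact (hsol n 0 x hx.1).mono Icc_subset_Ici_self
        · intro x hx
          exact ((hsol n 1 x hx.1).continuousWithinAt).mono Icc_subset_Ici_self
        · exact hB n
        · rw [hueq n t0 self_mem_Ici 0]
          exact href.2.1 0 t0 self_mem_Ici
      have hub0 : 0 ≤ ubar t0 0 := href.2.1 0 t0 self_mem_Ici
      refine ⟨(ubar t0 0 + freq lam N0 0 ^ alpha * B^2 * (t0 - p)) *
        Real.exp (freq lam N0 0 ^ 2 * (t0 - p)) + 1, ?_, ?_⟩
      · have hf0 : (0:ℝ) < freq lam N0 0 ^ alpha := Real.rpow_pos_of_pos (hfreq 0) _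
        have hBpos : 0 < B := mul_pos (by norm_num) (hamp _)
        have : 0 < t0 - p := by linarith
        positivity
      · intro n s hs
        obtain ⟨hge0, hle⟩ := hgron n s hs
        rw [abs_of_nonneg hge0]
        have hs_gt_p : p < s := lt_of_lt_of_le (htseq_gt n) hs.1
        have e1 : un n t0 0 = ubar t0 0 := hueq n t0 self_mem_Ici 0
        have hf0 : (0:ℝ) < freq lam N0 0 ^ alpha := Real.rpow_pos_of_pos (hfreq 0) _
        have hBpos : 0 < B := mul_pos (by norm_num) (hamp _)
        have e2 : un n t0 0 + freq lam N0 0 ^ alpha * B^2 * (t0 - tseq n)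
            ≤ ubar t0 0 + freq lam N0 0 ^ alpha * B^2 * (t0 - p) := by
          rw [e1]
          have := htseq_gt n
          have : freq lam N0 0 ^ alpha * B^2 * (t0 - tseq n)
              ≤ freq lam N0 0 ^ alpha * B^2 * (t0 - p) := by
            apply mul_le_mul_of_nonneg_left _ (by positivity)
            linarith [htseq_gt n]
          linarith
        have e3 : Real.exp (freq lam N0 0 ^ 2 * (t0 - s))
            ≤ Real.exp (freq lam N0 0 ^ 2 * (t0 - p)) := by
          apply Real.exp_le_exp.2
          apply mul_le_mul_of_nonneg_left _ (sq_nonneg _)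
          linarith
        have e4 : 0 ≤ un n t0 0 + freq lam N0 0 ^ alpha * B^2 * (t0 - tseq n) := by
          rw [e1]
          have := htseq_le n
          have h5 : 0 ≤ freq lam N0 0 ^ alpha * B^2 * (t0 - tseq n) := by
            apply mul_nonneg (by positivity)
            linarith [htseq_le n]
          linarith
        have := mul_le_mul e2 e3 (Real.exp_pos _).le (by linarith [hub0, mul_nonneg (mul_nonneg hf0.le (sq_nonneg B)) (by linarith : (0:ℝ) ≤ t0 - p)])
        linarith
  choose C hC0 hC using hCex
  -- derivative bounds
  have hMex : ∀ j : ℕ, ∃ Mj : ℝ, 0 ≤ Mj ∧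
      (∀ w : ℕ → ℝ, (∀ i, |w i| ≤ C i) → |obukhovRHS lam N0 alpha w j| ≤ Mj) := by
    intro j
    have h1 : (0:ℝ) < freq lam N0 (j:ℤ)^2 := pow_pos (hfreq _) 2
    have h2 : (0:ℝ) < freq lam N0 ((j:ℤ)-1)^alpha := Real.rpow_pos_of_pos (hfreq _) _
    have h3 : (0:ℝ) < freq lam N0 (j:ℤ)^alpha := Real.rpow_pos_of_pos (hfreq _) _
    refine ⟨freq lam N0 (j:ℤ)^2 * C j + freq lam N0 ((j:ℤ)-1)^alpha * (C (j-1) * C j)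
      + freq lam N0 (j:ℤ)^alpha * C (j+1)^2, ?_, ?_⟩
    · exact add_nonneg (add_nonneg (mul_nonneg h1.le (hC0 j).le)
        (mul_nonneg h2.le (mul_nonneg (hC0 _).le (hC0 _).le)))
        (mul_nonneg h3.le (pow_nonneg (hC0 _).le 2))
    · intro w hw
      exact obukhov_rhs_bound lam N0 alpha hlam0 hN0 j C w (hw _) (hw _) (hw _)
  choose M hM0 hMb using hMex
  have huncont : ∀ n (j : ℕ), ContinuousOn (fun s => un n s j) (Icc (tseq n) t0) :=
    fun n j x hx => ((hsol n j x hx.1).continuousWithinAt).mono Icc_subset_Ici_self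
  have hlip : ∀ n (j : ℕ), ∀ s1 ∈ Icc (tseq n) t0, ∀ s2 ∈ Icc (tseq n) t0,
      |un n s2 j - un n s1 j| ≤ M j * |s2 - s1| := by
    intro n j
    apply mylip (tseq n) t0 (M j) _ (fun x => obukhovRHS lam N0 alpha (un n x) j)
    · intro x hx
      exact (hsol n j x hx.1).mono Icc_subset_Ici_self
    · exact obukhov_rhs_continuousOn lam N0 alpha j (un n) _ (huncont n)
    · intro x hx
      exact hMb j (un n x) (fun i => hC i n x hx)
  -- clamping
  set cl : ℕ → ℝ → ℝ := fun n s => max (min s t0) (tseq n) with hcldef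
  have hclmem : ∀ n s, cl n s ∈ Icc (tseq n) t0 :=
    fun n s => ⟨le_max_right _ _, max_le (min_le_right _ _) (htseq_le n)⟩
  have hcl_eq : ∀ n, ∀ s ∈ Icc (tseq n) t0, cl n s = s := by
    intro n s hs
    rw [hcldef]; dsimp only
    rw [min_eq_left hs.2, max_eq_left hs.1]
  have hcl_eq2 : ∀ n, ∀ s ∈ Icc p t0, cl n s = max s (tseq n) := by
    intro n s hs
    rw [hcldef]; dsimp only; rw [min_eq_left hs.2]
  have hcl_lip : ∀ n s1 s2, |cl n s2 - cl n s1| ≤ |s2 - s1| := by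
    intro n s1 s2
    refine (abs_max_sub_max_le_abs _ _ _).trans ?_
    refine (abs_min_sub_min_le_max _ _ _ _).trans ?_
    simp
  set v : ℕ → ℝ → ℕ → ℝ := fun n s j => un n (cl n s) j with hvdef
  have hvC : ∀ n s (j : ℕ), |v n s j| ≤ C j := fun n s j => hC j n _ (hclmem n s)
  have hvlip : ∀ n (j:ℕ) s1 s2, |v n s2 j - v n s1 j| ≤ M j * |s2 - s1| := by
    intro n j s1 s2
    refine (hlip n j _ (hclmem n s1) _ (hclmem n s2)).trans ?_
    exact mul_le_mul_of_nonneg_left (hcl_lip n s1 s2) (hM0 j)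
  have hvcont : ∀ n (j : ℕ), Continuous (fun s => v n s j) :=
    fun n j => cont_of_lip (M j) _ (fun x y => hvlip n j x y)
  -- compactness extraction on rational times
  have hKmem : ∀ n, (fun q : ℚ × ℕ => v n (q.1 : ℝ) q.2) ∈
      Set.univ.pi (fun q : ℚ × ℕ => Icc (-(C q.2)) (C q.2)) := by
    intro n q _
    exact abs_le.1 (hvC n _ _)
  obtain ⟨w, hwK, φ, hφ, hconv⟩ :=
    (isCompact_univ_pi (fun q : ℚ × ℕ => isCompact_Icc)).tendsto_subseq hKmem
  have hconvQ : ∀ (q : ℚ) (j : ℕ), Filter.Tendsto (fun i => v (φ i) (q : ℝ) j)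
      Filter.atTop (nhds (w (q, j))) := fun q j => (tendsto_pi_nhds.1 hconv) (q, j)
  -- convergence at every real time
  have hconvR : ∀ (s : ℝ) (j : ℕ), ∃ L, Filter.Tendsto (fun i => v (φ i) s j)
      Filter.atTop (nhds L) := by
    intro s j
    apply cauchySeq_tendsto_of_complete
    rw [Metric.cauchySeq_iff]
    intro ε hε
    have hM1 : (0:ℝ) < M j + 1 := by linarith [hM0 j]
    obtain ⟨q, hq⟩ := exists_rat_near s (div_pos (div_pos hε (by norm_num : (0:ℝ) < 3)) hM1)
    have hcq := (hconvQ q j).cauchySeq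
    rw [Metric.cauchySeq_iff] at hcq
    obtain ⟨N, hN⟩ := hcq (ε/3) (by linarith)
    refine ⟨N, fun m hm n' hn' => ?_⟩
    have d1 : |v (φ m) s j - v (φ m) (q:ℝ) j| ≤ M j * |s - (q:ℝ)| := by
      have := hvlip (φ m) j (q:ℝ) s
      simpa using this
    have d2 : |v (φ n') (q:ℝ) j - v (φ n') s j| ≤ M j * |(q:ℝ) - s| := by
      have := hvlip (φ n') j s (q:ℝ)
      simpa using this
    have d3 := hN m hm n' hn'
    rw [Real.dist_eq] at d3 ⊢
    have habsq : |(q:ℝ) - s| = |s - (q:ℝ)| := abs_sub_comm _ _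
    have hsmall : M j * |s - (q:ℝ)| < ε/3 := by
      have e1 : M j * |s - (q:ℝ)| ≤ (M j + 1) * |s - (q:ℝ)| :=
        mul_le_mul_of_nonneg_right (by linarith) (abs_nonneg _)
      have e2 : (M j + 1) * |s - (q:ℝ)| < (M j + 1) * (ε/3/(M j + 1)) :=
        mul_lt_mul_of_pos_left hq hM1
      have e3 : (M j + 1) * (ε/3/(M j + 1)) = ε/3 := by field_simp
      linarith
    have t1 : |v (φ m) s j - v (φ n') s j| ≤
        |v (φ m) s j - v (φ m) (q:ℝ) j| + |v (φ m) (q:ℝ) j - v (φ n') (q:ℝ) j|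
          + |v (φ n') (q:ℝ) j - v (φ n') s j| := by
      have u1 := abs_sub_le (v (φ m) s j) (v (φ m) (q:ℝ) j) (v (φ n') s j)
      have u2 := abs_sub_le (v (φ m) (q:ℝ) j) (v (φ n') (q:ℝ) j) (v (φ n') s j)
      linarith
    rw [habsq] at d2
    linarith
  choose vlim hvlim using hconvR
  -- basic properties of the limit
  have hvlimC : ∀ (s : ℝ) (j : ℕ), |vlim s j| ≤ C j := fun s j =>
    le_of_tendsto ((hvlim s j).abs) (Filter.Eventually.of_forall (fun i => hvC (φ i) s j))
  have hvlimLip : ∀ (j : ℕ) (s1 s2 : ℝ), |vlim s2 j - vlim s1 j| ≤ M j * |s2 - s1| :=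
    fun j s1 s2 => le_of_tendsto (((hvlim s2 j).sub (hvlim s1 j)).abs)
      (Filter.Eventually.of_forall fun i => hvlip (φ i) j s1 s2)
  have hvlimcont : ∀ j : ℕ, Continuous (fun s => vlim s j) :=
    fun j => cont_of_lip (M j) _ (fun x y => hvlimLip j x y)
  have hvlim_t0 : ∀ j : ℕ, vlim t0 j = ubar t0 j := by
    intro j
    have h1 : (fun i => v (φ i) t0 j) = fun _ => ubar t0 j := by
      funext i
      show un (φ i) (cl (φ i) t0) j = _
      rw [hcl_eq (φ i) t0 ⟨htseq_le (φ i), le_rfl⟩]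
      exact hueq (φ i) t0 self_mem_Ici j
    exact tendsto_nhds_unique (hvlim t0 j) (h1 ▸ tendsto_const_nhds)
  -- moving clamped times
  set sm : ℝ → ℕ → ℝ := fun s i => max s (tseq (φ i)) with hsmdef
  have hsm_eq : ∀ s ∈ Icc p t0, ∀ (i : ℕ) (j : ℕ), un (φ i) (sm s i) j = v (φ i) s j := by
    intro s hs i j
    show _ = un (φ i) (cl (φ i) s) j
    rw [hcl_eq2 (φ i) s hs]
  have hsm_mem : ∀ s ∈ Icc p t0, ∀ i : ℕ, sm s i ∈ Icc (tseq (φ i)) t0 :=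
    fun s hs i => ⟨le_max_right _ _, max_le hs.2 (htseq_le _)⟩
  have htseqφ : Filter.Tendsto (fun i => tseq (φ i)) Filter.atTop (nhds p) :=
    htseq_tendsto.comp (hφ.tendsto_atTop)
  have hsm_tendsto : ∀ s ∈ Icc p t0,
      Filter.Tendsto (fun i => sm s i) Filter.atTop (nhds s) := by
    intro s hs
    have h1 := (tendsto_const_nhds (x := s) (f := Filter.atTop (α := ℕ))).max htseqφ
    rw [max_eq_left hs.1] at h1
    exact h1
  -- coordinates converge along moving times
  have hmov : ∀ s ∈ Icc p t0, ∀ j : ℕ,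
      Filter.Tendsto (fun i => un (φ i) (sm s i) j) Filter.atTop (nhds (vlim s j)) := by
    intro s hs j
    refine (hvlim s j).congr ?_
    intro i
    exact (hsm_eq s hs i j).symm
  -- the ball conditions in the limit
  have hballlim : ∀ k ∈ shell σ, ∀ s ∈ Icc p t0,
      lowb k s ≤ vlim s k ∧
      wr lam N0 alpha τ k s * |rGood lam N0 alpha (vlim s) k - 1|
        + wz lam N0 τ k s * |zGood lam N0 alpha (vlim s) k
          - 1 / 2 * Real.exp (-(freq lam N0 (k:ℤ)^2) * (s - τ k))| ≤ 1/100 := by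
    intro k hk s hs
    have hxk := hmov s hs k
    have hxk1 := hmov s hs (k-1)
    have hlow : lowb k s ≤ vlim s k := by
      have hlbt : Filter.Tendsto (fun i => lowb k (sm s i)) Filter.atTop (nhds (lowb k s)) :=
        ((hlowb_cont k).tendsto _).comp (hsm_tendsto s hs)
      refine le_of_tendsto_of_tendsto hlbt hxk (Filter.Eventually.of_forall fun i => ?_)
      exact (hdec (φ i) k hk (sm s i) (hsm_mem s hs i)).2.2
    refine ⟨hlow, ?_⟩
    have hvk_pos : 0 < vlim s k := lt_of_lt_of_le (hlowb_pos k s) hlow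
    have hr : Filter.Tendsto (fun i => rGood lam N0 alpha (un (φ i) (sm s i)) k)
        Filter.atTop (nhds (rGood lam N0 alpha (vlim s) k)) := by
      unfold rGood
      exact (Real.continuous_sqrt.tendsto _).comp
        ((((hxk1.div_const _).sub_const 1).pow 2).add ((hxk.div_const _).pow 2))
    have hz : Filter.Tendsto (fun i => zGood lam N0 alpha (un (φ i) (sm s i)) k)
        Filter.atTop (nhds (zGood lam N0 alpha (vlim s) k)) := by
      unfold zGood
      exact ((((hr.sub_const 1).const_mul _).add hxk1)).div hxk (ne_of_gt hvk_pos)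
    have hwrc : Filter.Tendsto (fun i => wr lam N0 alpha τ k (sm s i)) Filter.atTop
        (nhds (wr lam N0 alpha τ k s)) := by
      have hcont : Continuous (wr lam N0 alpha τ k) := by
        unfold wr
        exact continuous_const.max
          (Real.continuous_exp.comp (continuous_const.mul (continuous_id.sub continuous_const)))
      exact (hcont.tendsto _).comp (hsm_tendsto s hs)
    have hwzc : Filter.Tendsto (fun i => wz lam N0 τ k (sm s i)) Filter.atTop
        (nhds (wz lam N0 τ k s)) := by
      have hcont : Continuous (wz lam N0 τ k) := by
        unfold wz
        exact continuous_const.mul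
          (Real.continuous_exp.comp (continuous_const.mul (continuous_id.sub continuous_const)))
      exact (hcont.tendsto _).comp (hsm_tendsto s hs)
    have hexpc : Filter.Tendsto (fun i => Real.exp (-(freq lam N0 (k:ℤ)^2) * (sm s i - τ k)))
        Filter.atTop (nhds (Real.exp (-(freq lam N0 (k:ℤ)^2) * (s - τ k)))) := by
      have hcont : Continuous (fun x : ℝ => Real.exp (-(freq lam N0 (k:ℤ)^2) * (x - τ k))) :=
        Real.continuous_exp.comp (continuous_const.mul (continuous_id.sub continuous_const))
      exact (hcont.tendsto _).comp (hsm_tendsto s hs)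
    have hfull := (hwrc.mul ((hr.sub_const 1).abs)).add
      (hwzc.mul ((hz.sub (hexpc.const_mul (1/2))).abs))
    refine le_of_tendsto hfull (Filter.Eventually.of_forall fun i => ?_)
    have := hball (φ i) k hk (sm s i) (hsm_mem s hs i)
    convert this using 3
  -- the integral equation for the limit
  have hFcont : ∀ k : ℕ, Continuous (fun r => obukhovRHS lam N0 alpha (vlim r) k) := by
    intro k
    exact continuousOn_univ.mp (obukhov_rhs_continuousOn lam N0 alpha k vlim
      Set.univ (fun j => (hvlimcont j).continuousOn))
  have hvncont : ∀ (n : ℕ) (k : ℕ), Continuous (fun r => obukhovRHS lam N0 alpha (v n r) k) := by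
    intro n k
    exact continuousOn_univ.mp (obukhov_rhs_continuousOn lam N0 alpha k (v n)
      Set.univ (fun j => (hvcont n j).continuousOn))
  have hinteq : ∀ (k : ℕ), ∀ s ∈ Icc p t0,
      vlim s k = ubar t0 k - ∫ r in s..t0, obukhovRHS lam N0 alpha (vlim r) k := by
    intro k s hs
    -- identity along the sequence
    have hid : ∀ i : ℕ, ubar t0 k - un (φ i) (sm s i) k
        = (∫ r in s..t0, obukhovRHS lam N0 alpha (v (φ i) r) k)
          - ∫ r in s..(sm s i), obukhovRHS lam N0 alpha (v (φ i) r) k := by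
      intro i
      have hsmem := hsm_mem s hs i
      have hsub : Icc (sm s i) t0 ⊆ Icc (tseq (φ i)) t0 := Icc_subset_Icc hsmem.1 le_rfl
      have hftc : ∫ r in (sm s i)..t0, obukhovRHS lam N0 alpha (un (φ i) r) k
          = un (φ i) t0 k - un (φ i) (sm s i) k := by
        refine myftc (sm s i) t0 hsmem.2 (fun r => un (φ i) r k)
          (fun x => obukhovRHS lam N0 alpha (un (φ i) x) k) ?_ ?_
        · intro x hx
          exact (hsol (φ i) k x (hsub hx).1).mono (Icc_subset_Ici_self.trans' hsub)
        · exact (obukhov_rhs_continuousOn lam N0 alpha k (un (φ i)) _ (huncont (φ i))).mono hsub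
      have hcongr : ∫ r in (sm s i)..t0, obukhovRHS lam N0 alpha (un (φ i) r) k
          = ∫ r in (sm s i)..t0, obukhovRHS lam N0 alpha (v (φ i) r) k := by
        apply intervalIntegral.integral_congr
        intro x hx
        rw [Set.uIcc_of_le hsmem.2] at hx
        have hxmem : x ∈ Icc (tseq (φ i)) t0 := hsub hx
        show obukhovRHS lam N0 alpha (un (φ i) x) k = obukhovRHS lam N0 alpha (v (φ i) x) k
        have : v (φ i) x = un (φ i) x := by
          funext j
          show un (φ i) (cl (φ i) x) j = un (φ i) x j
          rw [hcl_eq (φ i) x hxmem]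
        rw [this]
      have hadd : (∫ r in s..(sm s i), obukhovRHS lam N0 alpha (v (φ i) r) k)
          + (∫ r in (sm s i)..t0, obukhovRHS lam N0 alpha (v (φ i) r) k)
          = ∫ r in s..t0, obukhovRHS lam N0 alpha (v (φ i) r) k := by
        apply intervalIntegral.integral_add_adjacent_intervals
        · exact (hvncont (φ i) k).intervalIntegrable _ _
        · exact (hvncont (φ i) k).intervalIntegrable _ _
      have heqt0 : un (φ i) t0 k = ubar t0 k := hueq (φ i) t0 self_mem_Ici k
      rw [← hadd, ← hcongr, hftc, heqt0]
      ring
    -- limits of both sides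
    have hL1 : Filter.Tendsto (fun i => ubar t0 k - un (φ i) (sm s i) k) Filter.atTop
        (nhds (ubar t0 k - vlim s k)) := tendsto_const_nhds.sub (hmov s hs k)
    have hL2 : Filter.Tendsto (fun i => ∫ r in s..t0, obukhovRHS lam N0 alpha (v (φ i) r) k)
        Filter.atTop (nhds (∫ r in s..t0, obukhovRHS lam N0 alpha (vlim r) k)) := by
      apply intervalIntegral.tendsto_integral_filter_of_dominated_convergence
        (bound := fun _ => M k)
      · exact Filter.Eventually.of_forall fun i =>
          ((hvncont (φ i) k).aestronglyMeasurable).restrict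
      · refine Filter.Eventually.of_forall fun i => MeasureTheory.ae_of_all _ fun x _ => ?_
        rw [Real.norm_eq_abs]
        exact hMb k (v (φ i) x) (fun j => hvC (φ i) x j)
      · exact intervalIntegrable_const
      · refine MeasureTheory.ae_of_all _ fun x _ => ?_
        exact obukhov_rhs_tendsto lam N0 alpha k (fun i => v (φ i) x) (vlim x)
          (fun j => hvlim x j)
    have hL3 : Filter.Tendsto (fun i => ∫ r in s..(sm s i), obukhovRHS lam N0 alpha (v (φ i) r) k)
        Filter.atTop (nhds 0) := by
      have hbnd : ∀ i : ℕ, ‖∫ r in s..(sm s i), obukhovRHS lam N0 alpha (v (φ i) r) k‖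
          ≤ M k * |sm s i - s| := by
        intro i
        apply intervalIntegral.norm_integral_le_of_norm_le_const
        intro x _
        rw [Real.norm_eq_abs]
        exact hMb k (v (φ i) x) (fun j => hvC (φ i) x j)
      have hg : Filter.Tendsto (fun i => M k * |sm s i - s|) Filter.atTop (nhds 0) := by
        have h1 : Filter.Tendsto (fun i => sm s i - s) Filter.atTop (nhds 0) := by
          have := (hsm_tendsto s hs).sub_const s
          simpa using this
        have h2 := (h1.abs).const_mul (M k)
        simpa using h2
      exact squeeze_zero_norm hbnd hg
    have := tendsto_nhds_unique hL1 ((hL2.sub hL3).congr (fun i => (hid i).symm))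
    rw [sub_zero] at this
    linarith [this]
  -- the candidate limit solution
  set uu : ℝ → ℕ → ℝ := fun s j => if t0 ≤ s then ubar s j else vlim s j with huudef
  have hagree : ∀ s ∈ Icc p t0, uu s = vlim s := by
    intro s hs
    funext j
    rw [huudef]; dsimp only
    by_cases h : t0 ≤ s
    · have hst : s = t0 := le_antisymm hs.2 h
      rw [if_pos h, hst, hvlim_t0 j]
    · rw [if_neg h]
  have hagree2 : ∀ s, t0 ≤ s → uu s = ubar s := by
    intro s h
    funext j
    rw [huudef]; dsimp only
    rw [if_pos h]
  have hprim : ∀ (k : ℕ) (s : ℝ), HasDerivAt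
      (fun x => ubar t0 k + ∫ r in t0..x, obukhovRHS lam N0 alpha (vlim r) k)
      (obukhovRHS lam N0 alpha (vlim s) k) s := by
    intro k s
    have h1 := intervalIntegral.integral_hasDerivAt_right
      ((hFcont k).intervalIntegrable t0 s)
      ((hFcont k).stronglyMeasurableAtFilter _ _)
      ((hFcont k).continuousAt)
    exact h1.const_add _
  have hGeq : ∀ (k : ℕ), ∀ x ∈ Icc p t0,
      uu x k = ubar t0 k + ∫ r in t0..x, obukhovRHS lam N0 alpha (vlim r) k := by
    intro k x hx
    have h1 := hinteq k x hx
    have h2 : (∫ r in t0..x, obukhovRHS lam N0 alpha (vlim r) k)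
        = - ∫ r in x..t0, obukhovRHS lam N0 alpha (vlim r) k :=
      intervalIntegral.integral_symm _ _
    have h3 : uu x k = vlim x k := congrFun (hagree x hx) k
    rw [h3, h1, h2]
    ring
  have hodeIcc : ∀ (k : ℕ), ∀ s ∈ Icc p t0, HasDerivWithinAt (fun x => uu x k)
      (obukhovRHS lam N0 alpha (uu s) k) (Icc p t0) s := by
    intro k s hs
    have h1 := (hprim k s).hasDerivWithinAt (s := Icc p t0)
    have h2 : HasDerivWithinAt (fun x => uu x k)
        (obukhovRHS lam N0 alpha (vlim s) k) (Icc p t0) s := by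
      apply h1.congr
      · intro x hx; exact hGeq k x hx
      · exact hGeq k s hs
    rwa [hagree s hs]
  have hodeIci : ∀ (k : ℕ), ∀ s ∈ Ici t0, HasDerivWithinAt (fun x => uu x k)
      (obukhovRHS lam N0 alpha (uu s) k) (Ici t0) s := by
    intro k s hs
    have h1 := href.1 k s hs
    have h2 : HasDerivWithinAt (fun x => uu x k)
        (obukhovRHS lam N0 alpha (ubar s) k) (Ici t0) s := by
      apply h1.congr
      · intro x hx; exact congrFun (hagree2 x hx) k
      · exact congrFun (hagree2 s hs) k
    rwa [hagree2 s hs]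
  have hballpos : ∀ k ∈ shell σ, ∀ s ∈ Icc p t0, 0 < uu s k := by
    intro k hk s hs
    have h := (hballlim k hk s hs).1
    have h3 : uu s k = vlim s k := congrFun (hagree s hs) k
    rw [h3]
    exact lt_of_lt_of_le (hlowb_pos k s) h
  have hballineq : ∀ k ∈ shell σ, ∀ s ∈ Icc p t0,
      wr lam N0 alpha τ k s * |rGood lam N0 alpha (uu s) k - 1|
        + wz lam N0 τ k s * |zGood lam N0 alpha (uu s) k
          - 1 / 2 * Real.exp (-(freq lam N0 (k:ℤ)^2) * (s - τ k))| ≤ 1/100 := by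
    intro k hk s hs
    rw [hagree s hs]
    exact (hballlim k hk s hs).2
  refine ⟨uu, ⟨?_, ?_, ?_, ?_⟩, ?_, ?_⟩
  · -- solution on Ici p
    intro k s hs
    rcases lt_trichotomy s t0 with hlt | heq | hgt
    · have hmem : Icc p t0 ∈ nhdsWithin s (Ici p) :=
        mem_nhdsWithin.mpr ⟨Iio t0, isOpen_Iio, hlt, fun x hx => ⟨hx.2, hx.1.le⟩⟩
      exact (hodeIcc k s ⟨hs, hlt.le⟩).mono_of_mem_nhdsWithin hmem
    · subst heq
      have hunion := (hodeIcc k t0 ⟨hs, le_rfl⟩).union (hodeIci k t0 self_mem_Ici)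
      rwa [Icc_union_Ici_eq_Ici hs] at hunion
    · have hmem : Ici t0 ∈ nhdsWithin s (Ici p) :=
        mem_nhdsWithin.mpr ⟨Ioi t0, isOpen_Ioi, hgt, fun x hx => show t0 ≤ x from hx.1.le⟩
      exact (hodeIci k s hgt.le).mono_of_mem_nhdsWithin hmem
  · -- equals ubar on Ici t0
    intro s hs kk
    exact congrFun (hagree2 s hs) kk
  · exact hballpos
  · intro k hk s hs
    exact le_trans (hballineq k hk s hs) (by norm_num)
  · exact hballpos
  · exact hballineq

/-- Proposition 3.6: the set of times at which the strong bootstrap hypothesis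
is satisfiable is closed in `[0, t₀]`. -/
theorem strong_hypothesis_set_closed (alpha : ℝ) (hα : alpha ∈ Ioo (2 : ℝ) 4) :
    ∃ lam0 : ℝ, 1 < lam0 ∧ ∀ lam : ℝ, lam0 ≤ lam → ∀ N0 : ℝ, 0 < N0 →
      ∀ σ ∈ ({1, 2} : Set ℕ), ∀ τ : ℕ → ℝ, Admissible lam N0 alpha σ τ →
      ∀ ubar : ℝ → ℕ → ℝ, RefSolution lam N0 alpha σ τ ubar →
      IsClosed {t : ℝ | t ∈ Icc 0 (tInit lam N0 alpha) ∧
        ∃ u : ℝ → ℕ → ℝ, StrongH lam N0 alpha σ τ ubar u t} := by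
  obtain ⟨hα2, hα4⟩ := hα
  refine ⟨2, one_lt_two, ?_⟩
  intro lam hlam N0 hN0 σ hσ τ _hadm ubar href
  have hσ' : σ = 1 ∨ σ = 2 := by simpa using hσ
  set t0 := tInit lam N0 alpha with ht0
  have hrestrict : ∀ (t s : ℝ), t ≤ s → s ≤ t0 → ∀ u, StrongH lam N0 alpha σ τ ubar u t →
      StrongH lam N0 alpha σ τ ubar u s := by
    intro t s hts hst0 u hu
    obtain ⟨⟨hsol, heq, hball10⟩, hball⟩ := hu
    have hsub : Icc s t0 ⊆ Icc t t0 := Icc_subset_Icc hts le_rfl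
    have hsub2 : Ici s ⊆ Ici t := Ici_subset_Ici.2 hts
    exact ⟨⟨fun k x hx => (hsol k x (hsub2 hx)).mono hsub2, heq,
      ⟨fun k hk x hx => hball10.1 k hk x (hsub hx), fun k hk x hx => hball10.2 k hk x (hsub hx)⟩⟩,
      ⟨fun k hk x hx => hball.1 k hk x (hsub hx), fun k hk x hx => hball.2 k hk x (hsub hx)⟩⟩
  rw [← isSeqClosed_iff_isClosed]
  intro ts p hts htp
  simp only [Set.mem_setOf_eq] at hts ⊢
  have hpIcc : p ∈ Icc 0 t0 :=
    isClosed_Icc.mem_of_tendsto htp (Filter.Eventually.of_forall fun n => (hts n).1)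
  by_cases hex : ∃ n, ts n ≤ p
  · obtain ⟨n, hn⟩ := hex
    obtain ⟨hmem, u, hu⟩ := hts n
    exact ⟨hpIcc, u, hrestrict _ _ hn hpIcc.2 u hu⟩
  · push_neg at hex
    have hppt : p < t0 := lt_of_lt_of_le (hex 0) (hts 0).1.2
    refine ⟨hpIcc, ?_⟩
    apply hard_case lam N0 alpha hα2 hα4 hlam hN0 σ hσ' τ ubar href p hppt
    intro s hs hst0
    obtain ⟨n, hn⟩ := (htp.eventually_lt_const hs).exists
    obtain ⟨_, u, hu⟩ := hts n
    exact ⟨u, hrestrict _ _ hn.le hst0 u hu⟩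
end
end

section
/- Let C > 0 and t₀ > 0. There exists a constant K depending only on C such that: for every continuous function g : (0,t₀] → [0,1] satisfying g(t) ≤ C( g(t₀)^{t/t₀} + t^{−1} ∫_{t}^{t₀} g(t′) dt′ ) for all t ∈ (0,t₀], one has g(t) ≤ K g(t₀)^{t/t₀} ( 1 + (t₀/t)^{C+1} ) for all t ∈ (0,t₀]. -/
open Set MeasureTheory

/-- Lemma A.1(ii): a backward Grönwall-type inequality, with constant
depending only on `C`. -/
theorem gronwall_type_two (C : ℝ) (hC : 0 < C) :
    ∃ K : ℝ, 0 < K ∧ ∀ t0 : ℝ, 0 < t0 → ∀ g : ℝ → ℝ,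
      ContinuousOn g (Ioc 0 t0) →
      (∀ t ∈ Ioc (0 : ℝ) t0, g t ∈ Icc (0 : ℝ) 1) →
      (∀ t ∈ Ioc (0 : ℝ) t0,
        g t ≤ C * (g t0 ^ (t / t0) + t⁻¹ * ∫ t' in t..t0, g t')) →
      ∀ t ∈ Ioc (0 : ℝ) t0,
        g t ≤ K * g t0 ^ (t / t0) * (1 + (t0 / t) ^ (C + 1)) := by
  refine ⟨C + C ^ 2, by positivity, ?_⟩
  intro t0 ht0 g hcont hrange hineq t ht
  obtain ⟨ht1, ht2⟩ := ht
  obtain ⟨ha0, ha1⟩ := hrange t0 ⟨ht0, le_refl _⟩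
  set a := g t0 with ha_def
  set b := a ^ (t / t0) with hb_def
  have hb0 : 0 ≤ b := Real.rpow_nonneg ha0 _
  -- a^(s/t0) ≤ b for s ∈ [t, t0]
  have hab : ∀ s ∈ Icc t t0, a ^ (s / t0) ≤ b := by
    intro s hs
    have hs0 : (0:ℝ) < s := lt_of_lt_of_le ht1 hs.1
    rcases eq_or_lt_of_le ha0 with h | h
    · rw [← h, Real.zero_rpow (ne_of_gt (div_pos hs0 ht0)), hb_def, ← h,
        Real.zero_rpow (ne_of_gt (div_pos ht1 ht0))]
    · exact Real.rpow_le_rpow_of_exponent_ge h ha1 (by gcongr; exact hs.1)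
  have hIcc : Icc t t0 ⊆ Ioc 0 t0 := fun x hx => ⟨lt_of_lt_of_le ht1 hx.1, hx.2⟩
  have hgc : ContinuousOn g (Icc t t0) := hcont.mono hIcc
  have hcontOO : ContinuousOn g (Ioo 0 t0) := hcont.mono Ioo_subset_Ioc_self
  -- the primitive
  set F : ℝ → ℝ := fun s => ∫ u in s..t0, g u with hF_def
  have hF0 : F t0 = 0 := intervalIntegral.integral_same
  have huIcc : uIcc t t0 = Icc t t0 := uIcc_of_le ht2
  have hintOn : IntegrableOn g (uIcc t t0) := by
    rw [huIcc]; exact hgc.integrableOn_Icc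
  have hFcont : ContinuousOn F (Icc t t0) := by
    rw [← huIcc]
    exact intervalIntegral.continuousOn_primitive_interval_left hintOn
  have hint : ∀ s ∈ Icc t t0, IntervalIntegrable g volume t0 s := by
    intro s hs
    apply ContinuousOn.intervalIntegrable
    apply hgc.mono
    rw [uIcc_comm, ← huIcc]
    exact uIcc_subset_uIcc (by rw [huIcc]; exact hs) right_mem_uIcc
  have hFderiv : ∀ s ∈ Ioo t t0, HasDerivAt F (-(g s)) s := by
    intro s hs
    have hsO : s ∈ Ioo (0:ℝ) t0 := ⟨lt_trans ht1 hs.1, hs.2⟩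
    have hG : HasDerivAt (fun x => ∫ u in t0..x, g u) (g s) s := by
      apply intervalIntegral.integral_hasDerivAt_right
        (hint s ⟨hs.1.le, hs.2.le⟩)
      · exact (hcontOO.stronglyMeasurableAtFilter isOpen_Ioo) s hsO
      · exact hcontOO.continuousAt (isOpen_Ioo.mem_nhds hsO)
    have hFeq : F = fun x => -∫ u in t0..x, g u := by
      funext x; exact intervalIntegral.integral_symm t0 x
    rw [hFeq]
    exact hG.neg
  -- the auxiliary function H and its derivative
  set H : ℝ → ℝ := fun s => s ^ C * F s + C * b / (C + 1) * s ^ (C + 1) with hH_def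
  set D : ℝ → ℝ := fun s => C * s ^ (C - 1) * F s - s ^ C * g s + C * b * s ^ C
    with hD_def
  have hHderiv : ∀ s ∈ Ioo t t0, HasDerivAt H (D s) s := by
    intro s hs
    have hs0 : (0:ℝ) < s := lt_trans ht1 hs.1
    have h1 : HasDerivAt (fun x : ℝ => x ^ C) (C * s ^ (C - 1)) s :=
      Real.hasDerivAt_rpow_const (Or.inl hs0.ne')
    have h2 : HasDerivAt (fun x : ℝ => x ^ (C + 1)) ((C + 1) * s ^ C) s := by
      have := Real.hasDerivAt_rpow_const (p := C + 1) (Or.inl hs0.ne')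
      simpa using this
    have h3 := (h1.mul (hFderiv s hs)).add ((h2.const_mul (C * b / (C + 1))))
    refine h3.congr_deriv ?_
    have hC1 : C + 1 ≠ 0 := by positivity
    have e : C * b / (C + 1) * ((C + 1) * s ^ C) = C * b * s ^ C := by
      rw [← mul_assoc, div_mul_cancel₀ _ hC1]
    show _ = C * s ^ (C - 1) * F s - s ^ C * g s + C * b * s ^ C
    linear_combination e
  have hHd : ∀ s ∈ Ioo t t0, 0 ≤ D s := by
    intro s hs
    have hs0 : (0:ℝ) < s := lt_trans ht1 hs.1
    have hsC : (0:ℝ) ≤ s ^ C := Real.rpow_nonneg hs0.le _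
    have hgs := hineq s ⟨hs0, hs.2.le⟩
    have hgs2 : g s ≤ C * (b + s⁻¹ * F s) := by
      have := hab s ⟨hs.1.le, hs.2.le⟩
      have hF' : (0:ℝ) ≤ 1 := zero_le_one
      nlinarith [hC.le]
    have key : s ^ (C - 1) = s ^ C * s⁻¹ := by
      rw [Real.rpow_sub hs0, Real.rpow_one, div_eq_mul_inv]
    have hmul : s ^ C * g s ≤ s ^ C * (C * (b + s⁻¹ * F s)) :=
      mul_le_mul_of_nonneg_left hgs2 hsC
    have hexp : s ^ C * (C * (b + s⁻¹ * F s)) = C * b * s ^ C + C * s ^ (C - 1) * F s := by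
      rw [key]; ring
    rw [hexp] at hmul
    simp only [hD_def]
    linarith
  have hHmono : MonotoneOn H (Icc t t0) := by
    apply monotoneOn_of_deriv_nonneg (convex_Icc t t0)
    · have hp1 : ContinuousOn (fun x : ℝ => x ^ C) (Icc t t0) := fun x _ =>
        (Real.continuousAt_rpow_const x C (Or.inr hC.le)).continuousWithinAt
      have hp2 : ContinuousOn (fun x : ℝ => x ^ (C + 1)) (Icc t t0) := fun x _ =>
        (Real.continuousAt_rpow_const x (C + 1) (Or.inr (by positivity))).continuousWithinAt
      exact (hp1.mul hFcont).add (continuousOn_const.mul hp2)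
    · intro s hs
      rw [interior_Icc] at hs
      exact ((hHderiv s hs).differentiableAt).differentiableWithinAt
    · intro s hs
      rw [interior_Icc] at hs
      rw [(hHderiv s hs).deriv]
      exact hHd s hs
  have hHle : H t ≤ H t0 := hHmono (left_mem_Icc.2 ht2) (right_mem_Icc.2 ht2) ht2
  -- unwind
  have hT0 : (0:ℝ) ≤ t0 ^ (C + 1) := Real.rpow_nonneg ht0.le _
  have hTt : (0:ℝ) ≤ t ^ (C + 1) := Real.rpow_nonneg ht1.le _
  have htC : (0:ℝ) < t ^ C := Real.rpow_pos_of_pos ht1 _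
  have hkey : t ^ C * F t ≤ C * b * t0 ^ (C + 1) := by
    have : t ^ C * F t + C * b / (C + 1) * t ^ (C + 1)
        ≤ t0 ^ C * F t0 + C * b / (C + 1) * t0 ^ (C + 1) := hHle
    rw [hF0, mul_zero, zero_add] at this
    have h1 : C * b / (C + 1) ≤ C * b := by
      rw [div_le_iff₀ (by positivity : (0:ℝ) < C + 1)]
      nlinarith [mul_nonneg (mul_nonneg hC.le hb0) hC.le]
    have h2 := mul_le_mul_of_nonneg_right h1 hT0
    have h3 : (0:ℝ) ≤ C * b / (C + 1) * t ^ (C + 1) :=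
      mul_nonneg (by positivity) hTt
    linarith
  have htpow : t ^ (C + 1) = t ^ C * t := by
    rw [Real.rpow_add_one ht1.ne']
  have hdivpow : (t0 / t) ^ (C + 1) = t0 ^ (C + 1) / t ^ (C + 1) :=
    Real.div_rpow ht0.le ht1.le _
  have hF_bound : t⁻¹ * F t ≤ C * b * (t0 / t) ^ (C + 1) := by
    rw [hdivpow, htpow]
    rw [← sub_nonneg]
    have heq : C * b * (t0 ^ (C + 1) / (t ^ C * t)) - t⁻¹ * F t
        = ((C * b * t0 ^ (C + 1)) - t ^ C * F t) / (t ^ C * t) := by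
      field_simp
    rw [heq]
    exact div_nonneg (by linarith) (by positivity)
  have hmain := hineq t ⟨ht1, ht2⟩
  have hX0 : (0:ℝ) ≤ (t0 / t) ^ (C + 1) := Real.rpow_nonneg (by positivity) _
  nlinarith [mul_le_mul_of_nonneg_left hF_bound hC.le,
    mul_nonneg (mul_nonneg hC.le hb0) hX0, mul_nonneg hC.le hb0,
    mul_nonneg (mul_nonneg (mul_nonneg hC.le hC.le) hb0) hX0]
end

section
/- Let α ∈ (2,4) and s ∈ (−2,0). There exists λ₀ > 1 depending only on α such that for all λ ≥ λ₀ and N₀ > 0 there is a constant K depending only on λ, α, s with the following property. Let σ ∈ {1,2}, let (τ_k)_{k∈2ℕ+σ} be admissible delays, and let u be a solution of the Obukhov dyadic model on [0,t₀] whose good unknowns lie in B_{σ,[0,t₀]}(1/100) and which, in the case σ = 2, satisfies 0 ≤ u₀(t) ≤ 3δ₁ for all t ∈ [0,t₀]. Then for every t ∈ [0,t₀], sup_{k∈2ℕ+σ} λ^{sk} ( |r_k(t) − r_k(0)| + |z_k(t) − z_k(0)| ) ≤ K (N₀² t)^{−s/2}. -/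
open Set MeasureTheory
open scoped ENNReal BigOperators

noncomputable section

section Helpers

variable {lam N0 alpha : ℝ}

lemma freq_eq_exp (hl : 0 < lam) (hN : 0 < N0) (j : ℤ) :
    freq lam N0 j = Real.exp ((j : ℝ) * Real.log lam + Real.log N0) := by
  rw [freq, ← Real.rpow_intCast lam j, Real.rpow_def_of_pos hl,
    mul_comm (Real.log lam) ((j : ℤ) : ℝ), Real.exp_add, Real.exp_log hN]

lemma amp_eq_exp (hl : 0 < lam) (hN : 0 < N0) (j : ℤ) :
    amp lam N0 alpha j
      = Real.exp ((((2:ℝ) - alpha) * (j : ℝ) + alpha) * Real.log lam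
          + ((2:ℝ) - alpha) * Real.log N0) := by
  rw [amp, freq_eq_exp hl hN, freq_eq_exp hl hN, ← Real.exp_mul,
    ← Real.exp_nat_mul, ← Real.exp_add]
  congr 1
  push_cast
  ring

lemma amp_pred (hl : 0 < lam) (hN : 0 < N0) (j : ℤ) :
    amp lam N0 alpha (j - 1) = lam ^ (alpha - 2) * amp lam N0 alpha j := by
  rw [amp_eq_exp hl hN, amp_eq_exp hl hN, Real.rpow_def_of_pos hl, ← Real.exp_add]
  congr 1
  push_cast
  ring

lemma key2 (hl : 0 < lam) (hN : 0 < N0) (j : ℤ) :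
    freq lam N0 (j - 1) ^ alpha * amp lam N0 alpha (j - 1)
      = lam ^ (alpha - 2) * freq lam N0 j ^ 2 := by
  rw [freq_eq_exp hl hN, freq_eq_exp hl hN, amp_eq_exp hl hN, ← Real.exp_mul,
    Real.rpow_def_of_pos hl, ← Real.exp_nat_mul, ← Real.exp_add, ← Real.exp_add]
  congr 1
  push_cast
  ring

lemma key3 (hl : 0 < lam) (hN : 0 < N0) (j : ℤ) :
    freq lam N0 j ^ alpha * amp lam N0 alpha (j + 1) ^ 2
      = lam ^ (4 - alpha) * (freq lam N0 j ^ 2 * amp lam N0 alpha j) := by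
  rw [amp_eq_exp hl hN, amp_eq_exp hl hN, freq_eq_exp hl hN,
    ← Real.exp_mul, Real.rpow_def_of_pos hl, ← Real.exp_nat_mul, ← Real.exp_nat_mul,
    ← Real.exp_add, ← Real.exp_add, ← Real.exp_add]
  congr 1
  push_cast
  ring

lemma key4 (hl : 0 < lam) (hN : 0 < N0) (j : ℤ) :
    freq lam N0 (j - 1) ^ 2 * amp lam N0 alpha (j - 1)
      = lam ^ (alpha - 4) * (freq lam N0 j ^ 2 * amp lam N0 alpha j) := by
  rw [freq_eq_exp hl hN, freq_eq_exp hl hN, amp_eq_exp hl hN, amp_eq_exp hl hN,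
    Real.rpow_def_of_pos hl, ← Real.exp_nat_mul, ← Real.exp_nat_mul,
    ← Real.exp_add, ← Real.exp_add, ← Real.exp_add]
  congr 1
  push_cast
  ring

end Helpers

set_option maxHeartbeats 2000000 in
/-- Lemma A.2(iii): the good unknowns converge to their data as `t → 0⁺` at
rate `(N₀² t)^{-s/2}`, uniformly over the parameters. -/
theorem good_unknowns_continuity_at_zero (alpha s : ℝ)
    (hα : alpha ∈ Ioo (2 : ℝ) 4) (hs : s ∈ Ioo (-2 : ℝ) 0) :
    ∃ lam0 : ℝ, 1 < lam0 ∧ ∀ lam : ℝ, lam0 ≤ lam →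
      ∃ K : ℝ, 0 < K ∧ ∀ N0 : ℝ, 0 < N0 →
      ∀ σ ∈ ({1, 2} : Set ℕ), ∀ τ : ℕ → ℝ, Admissible lam N0 alpha σ τ →
      ∀ u : ℝ → ℕ → ℝ,
        IsObukhovSolutionOn lam N0 alpha u (Icc 0 (tInit lam N0 alpha)) →
        GoodInBall lam N0 alpha σ τ u (Icc 0 (tInit lam N0 alpha)) (1 / 100) →
        (σ = 2 → ∀ t ∈ Icc (0 : ℝ) (tInit lam N0 alpha),
          0 ≤ u t 0 ∧ u t 0 ≤ 3 * amp lam N0 alpha 1) →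
        ∀ t ∈ Icc (0 : ℝ) (tInit lam N0 alpha), ∀ k ∈ shell σ,
          lam ^ (s * (k : ℝ)) *
              (|rGood lam N0 alpha (u t) k - rGood lam N0 alpha (u 0) k|
                + |zGood lam N0 alpha (u t) k - zGood lam N0 alpha (u 0) k|)
            ≤ K * (N0 ^ 2 * t) ^ (-s / 2) := by
  
  obtain ⟨hα2, hα4⟩ := hα
  obtain ⟨hs2, hs0⟩ := hs
  refine ⟨2, one_lt_two, ?_⟩
  intro lam hlam
  have hl0 : (0:ℝ) < lam := by linarith
  have hl1 : (1:ℝ) ≤ lam := by linarith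
  set Zm : ℝ := Real.exp 5 * lam ^ 2 with hZmdef
  have hZm1 : 1 ≤ Zm := by
    have h5 := Real.one_le_exp (by norm_num : (0:ℝ) ≤ 5)
    nlinarith
  have hZm0 : 0 < Zm := lt_of_lt_of_le one_pos hZm1
  clear_value Zm
  have hC1pos : (0:ℝ) < 21 * lam ^ 2 := by positivity
  refine ⟨60 * (21 * lam ^ 2) * Zm ^ 4,
    by positivity, ?_⟩
  
  intro N0 hN0 σ hσ τ hτ u hSol hBall hσ0 t ht k hk
  have hσ12 : σ = 1 ∨ σ = 2 := by
    rcases hσ with h | h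
    · exact Or.inl h
    · exact Or.inr h
  set I : Set ℝ := Icc (0:ℝ) (tInit lam N0 alpha) with hIdef
  have h0I : (0:ℝ) ∈ I := ⟨le_refl 0, le_trans ht.1 ht.2⟩
  have hFpos : ∀ j : ℤ, 0 < freq lam N0 j := fun j => mul_pos (zpow_pos hl0 j) hN0
  have hDpos : ∀ j : ℤ, 0 < amp lam N0 alpha j :=
    fun j => mul_pos (Real.rpow_pos_of_pos (hFpos _) _) (pow_pos (hFpos _) 2)
  -- rpow facts
  have hrpow2 : ∀ x : ℝ, x ≤ 2 → lam ^ x ≤ lam ^ (2:ℕ) := by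
    intro x hx
    have h := Real.rpow_le_rpow_of_exponent_le hl1 hx
    rwa [show ((2:ℝ)) = ((2:ℕ):ℝ) by norm_num, Real.rpow_natCast] at h
  have hrpow1 : ∀ x : ℝ, x ≤ 0 → lam ^ x ≤ 1 :=
    fun x hx => Real.rpow_le_one_of_one_le_of_nonpos hl1 hx
  -- step: |r - 1| ≤ 1/100 on the shell
  have goodr : ∀ j ∈ shell σ, ∀ x ∈ I, |rGood lam N0 alpha (u x) j - 1| ≤ 1/100 := by
    intro j hj x hx
    have hb := hBall.2 j hj x hx
    have hwr : 1 ≤ wr lam N0 alpha τ j x := by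
      refine le_trans ?_ (le_max_left _ _)
      rw [show (1:ℝ) = lam ^ (0:ℝ) by rw [Real.rpow_zero]]
      exact Real.rpow_le_rpow_of_exponent_le hl1 (by linarith)
    have hwz : 0 ≤ wz lam N0 τ j x * |zGood lam N0 alpha (u x) j
        - 1 / 2 * Real.exp (-(freq lam N0 (j : ℤ) ^ 2) * (x - τ j))| := by
      apply mul_nonneg _ (abs_nonneg _)
      rw [wz]; positivity
    nlinarith [abs_nonneg (rGood lam N0 alpha (u x) j - 1)]
  -- step: z close to its profile
  have goodz : ∀ j ∈ shell σ, ∀ x ∈ I,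
      |zGood lam N0 alpha (u x) j
          - 1 / 2 * Real.exp (-(freq lam N0 (j : ℤ) ^ 2) * (x - τ j))|
        ≤ 1/3000 * Real.exp (-(freq lam N0 (j : ℤ) ^ 2) * (x - τ j)) := by
    intro j hj x hx
    have hb := hBall.2 j hj x hx
    have hwr : 0 ≤ wr lam N0 alpha τ j x * |rGood lam N0 alpha (u x) j - 1| := by
      apply mul_nonneg _ (abs_nonneg _)
      exact le_trans (le_of_lt (Real.rpow_pos_of_pos hl0 _)) (le_max_left _ _)
    have h1 : wz lam N0 τ j x * |zGood lam N0 alpha (u x) j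
        - 1 / 2 * Real.exp (-(freq lam N0 (j : ℤ) ^ 2) * (x - τ j))| ≤ 1/100 := by
      linarith
    rw [wz] at h1
    have hE := Real.exp_pos (freq lam N0 (j : ℤ) ^ 2 * (x - τ j))
    have hE' : Real.exp (-(freq lam N0 (j : ℤ) ^ 2) * (x - τ j))
        = (Real.exp (freq lam N0 (j : ℤ) ^ 2 * (x - τ j)))⁻¹ := by
      rw [← Real.exp_neg]
      ring_nf
    rw [hE'] at h1 ⊢
    have hEE : Real.exp (freq lam N0 (j : ℤ) ^ 2 * (x - τ j))
        * (Real.exp (freq lam N0 (j : ℤ) ^ 2 * (x - τ j)))⁻¹ = 1 :=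
      mul_inv_cancel₀ (ne_of_gt hE)
    nlinarith [abs_nonneg (zGood lam N0 alpha (u x) j
      - 1 / 2 * (Real.exp (freq lam N0 (j : ℤ) ^ 2 * (x - τ j)))⁻¹), hE, hEE, h1]
  -- step: exp(-N²(x-τ)) ≤ Zm on the shell
  have hEub : ∀ j ∈ shell σ, ∀ x ∈ I,
      Real.exp (-(freq lam N0 (j : ℤ) ^ 2) * (x - τ j)) ≤ Zm := by
    intro j hj x hx
    have hτj := (abs_le.1 (hτ j hj)).2
    have hF2 : 0 ≤ freq lam N0 (j : ℤ) ^ 2 := sq_nonneg _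
    have hx0 : 0 ≤ x := hx.1
    have h1 : -(freq lam N0 (j : ℤ) ^ 2) * (x - τ j)
        ≤ (alpha - 2) * Real.log lam + 5 := by nlinarith
    calc Real.exp (-(freq lam N0 (j : ℤ) ^ 2) * (x - τ j))
        ≤ Real.exp ((alpha - 2) * Real.log lam + 5) := Real.exp_le_exp.2 h1
      _ = Real.exp 5 * lam ^ (alpha - 2) := by
          rw [Real.exp_add, Real.rpow_def_of_pos hl0, mul_comm ((alpha:ℝ)-2),
            mul_comm]
      _ ≤ Real.exp 5 * lam ^ (2:ℕ) := by
          have := hrpow2 (alpha - 2) (by linarith)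
          nlinarith [Real.exp_pos (5:ℝ)]
      _ = Zm := hZmdef.symm
  -- step: |z| ≤ Zm on the shell
  have hzub : ∀ j ∈ shell σ, ∀ x ∈ I, |zGood lam N0 alpha (u x) j| ≤ Zm := by
    intro j hj x hx
    have h1 := goodz j hj x hx
    have h2 := hEub j hj x hx
    have h3 := Real.exp_pos (-(freq lam N0 (j : ℤ) ^ 2) * (x - τ j))
    have h4 := abs_sub_abs_le_abs_sub (zGood lam N0 alpha (u x) j)
      (1 / 2 * Real.exp (-(freq lam N0 (j : ℤ) ^ 2) * (x - τ j)))
    rw [abs_of_pos (by positivity : (0:ℝ) < 1 / 2 * Real.exp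
      (-(freq lam N0 (j : ℤ) ^ 2) * (x - τ j)))] at h4
    nlinarith
  -- amp is decreasing
  have hDmono : ∀ j : ℤ, amp lam N0 alpha j ≤ amp lam N0 alpha (j - 1) := by
    intro j
    rw [amp_pred hl0 hN0]
    have h1 : (1:ℝ) ≤ lam ^ (alpha - 2) := by
      rw [show (1:ℝ) = lam ^ (0:ℝ) by rw [Real.rpow_zero]]
      exact Real.rpow_le_rpow_of_exponent_le hl1 (by linarith)
    nlinarith [hDpos j]
  -- step: uniform bound |u_m| ≤ 3 δ_m
  have hub : ∀ m : ℕ, ∀ x ∈ I, |u x m| ≤ 3 * amp lam N0 alpha (m:ℤ) := by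
    intro m x hx
    have hcase : (σ ≤ m ∧ m % 2 = σ % 2) ∨ (σ ≤ m+1 ∧ (m+1) % 2 = σ % 2)
        ∨ (σ = 2 ∧ m = 0) := by
      rcases hσ12 with h | h <;> subst h <;> omega
    rcases hcase with hm | hm | ⟨h2, h0⟩
    · have hr := goodr m hm x hx
      have hd := hDpos (m:ℤ)
      have h1 : |u x m / amp lam N0 alpha (m:ℤ)| ≤ rGood lam N0 alpha (u x) m := by
        rw [rGood, ← Real.sqrt_sq_eq_abs]
        apply Real.sqrt_le_sqrt
        nlinarith [sq_nonneg (u x (m-1) / amp lam N0 alpha (m:ℤ) - 1)]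
      rw [abs_div, abs_of_pos hd] at h1
      have h2 := abs_le.1 hr
      rw [div_le_iff₀ hd] at h1
      nlinarith [abs_nonneg (u x m)]
    · have hr := goodr (m+1) hm x hx
      have hd := hDpos ((m+1:ℕ):ℤ)
      have h1 : |u x m / amp lam N0 alpha ((m+1:ℕ):ℤ) - 1|
          ≤ rGood lam N0 alpha (u x) (m+1) := by
        rw [rGood, ← Real.sqrt_sq_eq_abs]
        apply Real.sqrt_le_sqrt
        simp only [Nat.add_sub_cancel]
        nlinarith [sq_nonneg (u x (m+1) / amp lam N0 alpha ((m+1:ℕ):ℤ))]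
      have h2 := abs_le.1 h1
      have h3 := abs_le.1 hr
      have hmono : amp lam N0 alpha ((m+1:ℕ):ℤ) ≤ amp lam N0 alpha (m:ℤ) := by
        have h := hDmono ((m:ℤ)+1)
        have hc : ((m:ℤ)+1) - 1 = (m:ℤ) := by ring
        rw [hc] at h
        have hc2 : ((m+1:ℕ):ℤ) = (m:ℤ)+1 := by push_cast; ring
        rw [hc2]
        exact h
      have hu1 : u x m ≤ (201/100) * amp lam N0 alpha ((m+1:ℕ):ℤ) := by
        have : u x m / amp lam N0 alpha ((m+1:ℕ):ℤ) ≤ 201/100 := by linarith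
        calc u x m = u x m / amp lam N0 alpha ((m+1:ℕ):ℤ)
              * amp lam N0 alpha ((m+1:ℕ):ℤ) := (div_mul_cancel₀ _ (ne_of_gt hd)).symm
          _ ≤ (201/100) * amp lam N0 alpha ((m+1:ℕ):ℤ) :=
              mul_le_mul_of_nonneg_right this hd.le
      have hu2 : -((201/100) * amp lam N0 alpha ((m+1:ℕ):ℤ)) ≤ u x m := by
        have h6 : -(201/100) ≤ u x m / amp lam N0 alpha ((m+1:ℕ):ℤ) := by linarith
        calc -((201/100) * amp lam N0 alpha ((m+1:ℕ):ℤ))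
            = -(201/100) * amp lam N0 alpha ((m+1:ℕ):ℤ) := by ring
          _ ≤ u x m / amp lam N0 alpha ((m+1:ℕ):ℤ)
              * amp lam N0 alpha ((m+1:ℕ):ℤ) := mul_le_mul_of_nonneg_right h6 hd.le
          _ = u x m := div_mul_cancel₀ _ (ne_of_gt hd)
      rw [abs_le]
      constructor <;> linarith [hDpos (m:ℤ)]
    · subst h0
      obtain ⟨hu0, hu3⟩ := hσ0 h2 x hx
      have hmono : amp lam N0 alpha 1 ≤ amp lam N0 alpha 0 := by
        have := hDmono 1; simpa using this
      rw [abs_of_nonneg hu0]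
      simp only [Nat.cast_zero]
      linarith
  -- step: bound on the RHS of the equation
  have hl2 : (1:ℝ) ≤ lam ^ (2:ℕ) := by nlinarith
  have hRHS : ∀ m : ℕ, ∀ x ∈ I, |obukhovRHS lam N0 alpha (u x) m|
      ≤ 21 * lam ^ 2 * (freq lam N0 (m:ℤ) ^ 2 * amp lam N0 alpha (m:ℤ) ) := by
    intro m x hx
    have hF := hFpos (m:ℤ)
    have hD := hDpos (m:ℤ)
    have hu1 := hub m x hx
    have hu2 := hub (m+1) x hx
    have hFD : 0 < freq lam N0 (m:ℤ) ^ 2 * amp lam N0 alpha (m:ℤ) := by positivity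
    have h1 : |(-(freq lam N0 (m:ℤ) ^ 2)) * u x m|
        ≤ 3 * (freq lam N0 (m:ℤ) ^ 2 * amp lam N0 alpha (m:ℤ)) := by
      rw [abs_mul, abs_neg, abs_of_nonneg (sq_nonneg _)]
      nlinarith [sq_nonneg (freq lam N0 (m:ℤ))]
    have h3 : |freq lam N0 (m:ℤ) ^ alpha * (u x (m+1)) ^ 2|
        ≤ 9 * lam ^ (2:ℕ) * (freq lam N0 (m:ℤ) ^ 2 * amp lam N0 alpha (m:ℤ)) := by
      have hcast : ((m+1:ℕ):ℤ) = (m:ℤ)+1 := by push_cast; ring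
      have hk3 := key3 (alpha := alpha) hl0 hN0 (m:ℤ)
      have hαF : 0 < freq lam N0 (m:ℤ) ^ alpha := Real.rpow_pos_of_pos hF _
      have h9 : (u x (m+1)) ^ 2 ≤ 9 * amp lam N0 alpha ((m:ℤ)+1) ^ 2 := by
        rw [← hcast]
        nlinarith [sq_abs (u x (m+1)), hDpos ((m+1:ℕ):ℤ), abs_nonneg (u x (m+1))]
      have hry : lam ^ (4-alpha) ≤ lam ^ (2:ℕ) := hrpow2 _ (by linarith)
      rw [abs_mul, abs_of_pos hαF, abs_of_nonneg (sq_nonneg _)]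
      calc freq lam N0 (m:ℤ) ^ alpha * (u x (m+1)) ^ 2
          ≤ freq lam N0 (m:ℤ) ^ alpha * (9 * amp lam N0 alpha ((m:ℤ)+1) ^ 2) :=
            mul_le_mul_of_nonneg_left h9 hαF.le
        _ = 9 * (freq lam N0 (m:ℤ) ^ alpha * amp lam N0 alpha ((m:ℤ)+1) ^ 2) := by
            ring
        _ = 9 * (lam ^ (4-alpha)
              * (freq lam N0 (m:ℤ) ^ 2 * amp lam N0 alpha (m:ℤ))) := by rw [hk3]
        _ ≤ 9 * lam ^ (2:ℕ)
              * (freq lam N0 (m:ℤ) ^ 2 * amp lam N0 alpha (m:ℤ)) := by nlinarith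
    have h2 : |(if m = 0 then (0:ℝ) else freq lam N0 ((m:ℤ)-1) ^ alpha
          * u x (m-1) * u x m)|
        ≤ 9 * lam ^ (2:ℕ) * (freq lam N0 (m:ℤ) ^ 2 * amp lam N0 alpha (m:ℤ)) := by
      by_cases hm : m = 0
      · rw [if_pos hm, abs_zero]
        positivity
      · rw [if_neg hm]
        have hm1 : 1 ≤ m := Nat.one_le_iff_ne_zero.2 hm
        have hcast : ((m-1:ℕ):ℤ) = (m:ℤ)-1 := by omega
        have hu0 := hub (m-1) x hx
        rw [hcast] at hu0
        have hk2 := key2 (alpha := alpha) hl0 hN0 (m:ℤ)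
        have hαF : 0 < freq lam N0 ((m:ℤ)-1) ^ alpha :=
          Real.rpow_pos_of_pos (hFpos _) _
        have hry : lam ^ (alpha-2) ≤ lam ^ (2:ℕ) := hrpow2 _ (by linarith)
        have hDm1 := hDpos ((m:ℤ)-1)
        rw [abs_mul, abs_mul, abs_of_pos hαF]
        calc freq lam N0 ((m:ℤ)-1) ^ alpha * |u x (m-1)| * |u x m|
            ≤ freq lam N0 ((m:ℤ)-1) ^ alpha * (3 * amp lam N0 alpha ((m:ℤ)-1))
                * (3 * amp lam N0 alpha (m:ℤ)) := by
              apply mul_le_mul (mul_le_mul_of_nonneg_left hu0 hαF.le) hu1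
                (abs_nonneg _) (by positivity)
          _ = 9 * (freq lam N0 ((m:ℤ)-1) ^ alpha * amp lam N0 alpha ((m:ℤ)-1))
                * amp lam N0 alpha (m:ℤ) := by ring
          _ = 9 * (lam ^ (alpha-2) * freq lam N0 (m:ℤ) ^ 2)
                * amp lam N0 alpha (m:ℤ) := by rw [hk2]
          _ ≤ 9 * lam ^ (2:ℕ)
                * (freq lam N0 (m:ℤ) ^ 2 * amp lam N0 alpha (m:ℤ)) := by
              nlinarith [sq_nonneg (freq lam N0 (m:ℤ))]
    have heq : obukhovRHS lam N0 alpha (u x) m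
        = (-(freq lam N0 (m:ℤ) ^ 2)) * u x m
          + (if m = 0 then (0:ℝ) else freq lam N0 ((m:ℤ)-1) ^ alpha
              * u x (m-1) * u x m)
          + (-(freq lam N0 (m:ℤ) ^ alpha * (u x (m+1)) ^ 2)) := by
      rw [obukhovRHS]; ring
    calc |obukhovRHS lam N0 alpha (u x) m|
        ≤ |(-(freq lam N0 (m:ℤ) ^ 2)) * u x m
            + (if m = 0 then (0:ℝ) else freq lam N0 ((m:ℤ)-1) ^ alpha
                * u x (m-1) * u x m)|
          + |(-(freq lam N0 (m:ℤ) ^ alpha * (u x (m+1)) ^ 2))| := by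
          rw [heq]; exact abs_add_le _ _
      _ ≤ |(-(freq lam N0 (m:ℤ) ^ 2)) * u x m|
          + |(if m = 0 then (0:ℝ) else freq lam N0 ((m:ℤ)-1) ^ alpha
              * u x (m-1) * u x m)|
          + |freq lam N0 (m:ℤ) ^ alpha * (u x (m+1)) ^ 2| := by
          rw [abs_neg]
          linarith [abs_add_le ((-(freq lam N0 (m:ℤ) ^ 2)) * u x m)
            (if m = 0 then (0:ℝ) else freq lam N0 ((m:ℤ)-1) ^ alpha
              * u x (m-1) * u x m)]
      _ ≤ 21 * lam ^ 2 * (freq lam N0 (m:ℤ) ^ 2 * amp lam N0 alpha (m:ℤ)) := by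
          nlinarith [hFD, hl2, h1, h2, h3]
  -- step: Lipschitz bound for u
  have hLip : ∀ m : ℕ, ∀ x ∈ I, |u x m - u 0 m|
      ≤ 21 * lam ^ 2 * (freq lam N0 (m:ℤ) ^ 2 * amp lam N0 alpha (m:ℤ)) * x := by
    intro m x hx
    have h := Convex.norm_image_sub_le_of_norm_hasDerivWithin_le
      (f := fun s => u s m) (f' := fun y => obukhovRHS lam N0 alpha (u y) m)
      (fun y hy => hSol m y hy) (fun y hy => by
        simpa [Real.norm_eq_abs] using hRHS m y hy)
      (convex_Icc _ _) h0I hx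
    simpa [Real.norm_eq_abs, abs_of_nonneg hx.1] using h
  
  -- now fix the shell index k
  have hσ1 : 1 ≤ σ := by rcases hσ12 with h | h <;> omega
  have hk1 : 1 ≤ k := le_trans hσ1 hk.1
  have hkcast : ((k-1:ℕ):ℤ) = (k:ℤ)-1 := by omega
  set d : ℝ := amp lam N0 alpha ((k:ℕ):ℤ) with hd_def
  have hd : 0 < d := hDpos _
  set Nk : ℝ := freq lam N0 ((k:ℕ):ℤ) ^ 2 with hNk_def
  have hNk : 0 < Nk := pow_pos (hFpos _) 2
  set A : ℝ → ℝ := fun y => u y (k-1) / d - 1 with hA_def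
  set B : ℝ → ℝ := fun y => u y k / d with hB_def
  have hre : ∀ y : ℝ, rGood lam N0 alpha (u y) k = Real.sqrt (A y ^ 2 + B y ^ 2) :=
    fun y => rfl
  have hBpos : ∀ x ∈ I, 0 < B x := by
    intro x hx
    rw [hB_def]
    exact div_pos (hBall.1 k hk x hx) hd
  clear_value d Nk A B
  have hfacts : ∀ x ∈ I, 99/100 ≤ Real.sqrt (A x ^ 2 + B x ^ 2)
      ∧ Real.sqrt (A x ^ 2 + B x ^ 2) ≤ 101/100 := by
    intro x hx
    have h := abs_le.1 (goodr k hk x hx)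
    rw [hre x] at h
    constructor <;> linarith [h.1, h.2]
  have hsq : ∀ x : ℝ, Real.sqrt (A x ^ 2 + B x ^ 2) ^ 2 = A x ^ 2 + B x ^ 2 :=
    fun x => Real.sq_sqrt (by positivity)
  have hAle : ∀ x : ℝ, |A x| ≤ Real.sqrt (A x ^ 2 + B x ^ 2) := by
    intro x
    rw [← Real.sqrt_sq_eq_abs]
    exact Real.sqrt_le_sqrt (by nlinarith [sq_nonneg (B x)])
  have hBle : ∀ x : ℝ, B x ≤ Real.sqrt (A x ^ 2 + B x ^ 2) := by
    intro x
    calc B x ≤ |B x| := le_abs_self _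
      _ = Real.sqrt (B x ^ 2) := (Real.sqrt_sq_eq_abs _).symm
      _ ≤ _ := Real.sqrt_le_sqrt (by nlinarith [sq_nonneg (A x)])
  have hzeq : ∀ x ∈ I, zGood lam N0 alpha (u x) k
      = (Real.sqrt (A x ^ 2 + B x ^ 2) + A x) / B x := by
    intro x hx
    have hBne : B x ≠ 0 := ne_of_gt (hBpos x hx)
    have hu1 : u x (k-1) = d * (A x + 1) := by
      rw [hA_def]
      rw [sub_add_cancel, mul_comm, div_mul_cancel₀ _ hd.ne']
    have hu2 : u x k = d * B x := by
      rw [hB_def]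
      rw [mul_comm, div_mul_cancel₀ _ hd.ne']
    rw [zGood, hre x, hu1, hu2, ← hd_def]
    rw [div_eq_div_iff (mul_pos hd (hBpos x hx)).ne' hBne]
    ring
  have hprod : ∀ x : ℝ, (Real.sqrt (A x ^ 2 + B x ^ 2) + A x)
      * (Real.sqrt (A x ^ 2 + B x ^ 2) - A x) = B x ^ 2 := by
    intro x
    linear_combination hsq x
  have hRApos : ∀ x ∈ I, 2/5 / Zm ^ 2 ≤ Real.sqrt (A x ^ 2 + B x ^ 2) - A x := by
    intro x hx
    obtain ⟨hR1, hR2⟩ := hfacts x hx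
    have hBx := hBpos x hx
    have hAR : A x ≤ Real.sqrt (A x ^ 2 + B x ^ 2) :=
      le_trans (le_abs_self _) (hAle x)
    rcases le_or_gt (A x) 0 with hA0 | hA0
    · have h1 : (2:ℝ)/5 / Zm ^ 2 ≤ 2/5 := by
        rw [div_le_iff₀ (by positivity)]
        nlinarith [hZm1, hZm0]
      linarith
    · have hz := hzub k hk x hx
      rw [hzeq x hx] at hz
      have hzZ : (Real.sqrt (A x ^ 2 + B x ^ 2) + A x) / B x ≤ Zm :=
        le_trans (le_abs_self _) hz
      have hBz : 99/100 ≤ B x * Zm := by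
        have h2 := (div_le_iff₀ hBx).1 hzZ
        nlinarith [hR1, hA0, h2]
      have hup : Real.sqrt (A x ^ 2 + B x ^ 2) + A x ≤ 202/100 := by linarith
      have hRA0 : 0 ≤ Real.sqrt (A x ^ 2 + B x ^ 2) - A x := by linarith
      rw [div_le_iff₀ (by positivity : (0:ℝ) < Zm ^ 2)]
      have hkey : (Real.sqrt (A x ^ 2 + B x ^ 2) - A x) * Zm ^ 2
          * (Real.sqrt (A x ^ 2 + B x ^ 2) + A x) = (B x * Zm) ^ 2 := by
        linear_combination Zm ^ 2 * hprod x
      have hB2 : (99/100:ℝ) ^ 2 ≤ (B x * Zm) ^ 2 := by nlinarith [hBz, hBx, hZm0]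
      nlinarith [mul_nonneg hRA0 (sq_nonneg Zm), hkey, hB2, hup]
  have hRAne : ∀ x ∈ I, Real.sqrt (A x ^ 2 + B x ^ 2) - A x ≠ 0 := by
    intro x hx
    have h1 : (0:ℝ) < 2/5 / Zm ^ 2 := by positivity
    exact ne_of_gt (lt_of_lt_of_le h1 (hRApos x hx))
  have hzeq2 : ∀ x ∈ I, zGood lam N0 alpha (u x) k
      = B x / (Real.sqrt (A x ^ 2 + B x ^ 2) - A x) := by
    intro x hx
    rw [hzeq x hx, div_eq_div_iff (ne_of_gt (hBpos x hx)) (hRAne x hx)]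
    linear_combination hprod x
  
  -- size of the derivatives of A and B
  have ha'le : ∀ x ∈ I, |obukhovRHS lam N0 alpha (u x) (k-1) / d|
      ≤ 21*lam^2*Nk := by
    intro x hx
    have h := hRHS (k-1) x hx
    rw [hkcast] at h
    have hk4 := key4 (alpha := alpha) hl0 hN0 ((k:ℕ):ℤ)
    have hlle : lam ^ (alpha - 4) ≤ 1 := hrpow1 _ (by linarith)
    have h2 : freq lam N0 ((k:ℤ)-1) ^ 2 * amp lam N0 alpha ((k:ℤ)-1) ≤ Nk * d := by
      rw [hNk_def, hd_def, hk4]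
      nlinarith [mul_pos (pow_pos (hFpos ((k:ℕ):ℤ)) 2) (hDpos ((k:ℕ):ℤ))]
    rw [abs_div, abs_of_pos hd, div_le_iff₀ hd]
    calc |obukhovRHS lam N0 alpha (u x) (k-1)|
        ≤ 21*lam^2 * (freq lam N0 ((k:ℤ)-1) ^ 2 * amp lam N0 alpha ((k:ℤ)-1)) := h
      _ ≤ 21*lam^2 * (Nk * d) := by nlinarith [hC1pos]
      _ = 21*lam^2*Nk*d := by ring
  have hb'le : ∀ x ∈ I, |obukhovRHS lam N0 alpha (u x) k / d| ≤ 21*lam^2*Nk := by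
    intro x hx
    have h := hRHS k x hx
    rw [← hNk_def, ← hd_def] at h
    rw [abs_div, abs_of_pos hd, div_le_iff₀ hd]
    linarith
  -- derivative facts
  have hA' : ∀ x ∈ I, HasDerivWithinAt A
      (obukhovRHS lam N0 alpha (u x) (k-1) / d) I x := by
    intro x hx
    rw [hA_def]
    exact ((hSol (k-1) x hx).div_const d).sub_const 1
  have hB' : ∀ x ∈ I, HasDerivWithinAt B
      (obukhovRHS lam N0 alpha (u x) k / d) I x := by
    intro x hx
    rw [hB_def]
    exact (hSol k x hx).div_const d
  have hR' : ∀ x ∈ I, HasDerivWithinAt (fun y => Real.sqrt (A y ^ 2 + B y ^ 2))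
      ((A x * (obukhovRHS lam N0 alpha (u x) (k-1) / d)
        + B x * (obukhovRHS lam N0 alpha (u x) k / d))
        / Real.sqrt (A x ^ 2 + B x ^ 2)) I x := by
    intro x hx
    have hR1 := (hfacts x hx).1
    have hRpos : 0 < Real.sqrt (A x ^ 2 + B x ^ 2) :=
      lt_of_lt_of_le (by norm_num) hR1
    have hSne : A x ^ 2 + B x ^ 2 ≠ 0 := by
      have h := hsq x
      nlinarith
    have h3 := ((hA' x hx).pow 2).add ((hB' x hx).pow 2)
    have h := (Real.hasDerivAt_sqrt hSne).comp_hasDerivWithinAt x h3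
    refine h.congr_deriv ?_
    field_simp
    ring
  -- Lipschitz bound for r
  have hR'le : ∀ x ∈ I, |(A x * (obukhovRHS lam N0 alpha (u x) (k-1) / d)
      + B x * (obukhovRHS lam N0 alpha (u x) k / d))
      / Real.sqrt (A x ^ 2 + B x ^ 2)| ≤ 3 * (21*lam^2*Nk) := by
    intro x hx
    obtain ⟨hR1, hR2⟩ := hfacts x hx
    have ha := ha'le x hx
    have hb := hb'le x hx
    have hA1 : |A x| ≤ 101/100 := le_trans (hAle x) hR2
    have hB1 : |B x| ≤ 101/100 := by
      rw [abs_of_pos (hBpos x hx)]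
      linarith [hBle x]
    have hXpos : (0:ℝ) < 21*lam^2*Nk := by positivity
    have hnum : |A x * (obukhovRHS lam N0 alpha (u x) (k-1) / d)
        + B x * (obukhovRHS lam N0 alpha (u x) k / d)|
        ≤ (202/100) * (21*lam^2*Nk) := by
      calc |A x * (obukhovRHS lam N0 alpha (u x) (k-1) / d)
          + B x * (obukhovRHS lam N0 alpha (u x) k / d)|
          ≤ |A x * (obukhovRHS lam N0 alpha (u x) (k-1) / d)|
            + |B x * (obukhovRHS lam N0 alpha (u x) k / d)| := abs_add_le _ _
        _ = |A x| * |obukhovRHS lam N0 alpha (u x) (k-1) / d|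
            + |B x| * |obukhovRHS lam N0 alpha (u x) k / d| := by
            rw [abs_mul, abs_mul]
        _ ≤ (101/100) * (21*lam^2*Nk) + (101/100) * (21*lam^2*Nk) := by
            have h1 := mul_le_mul hA1 ha (abs_nonneg _) (by norm_num)
            have h2 := mul_le_mul hB1 hb (abs_nonneg _) (by norm_num)
            linarith
        _ = (202/100) * (21*lam^2*Nk) := by ring
    have hRpos : 0 < Real.sqrt (A x ^ 2 + B x ^ 2) :=
      lt_of_lt_of_le (by norm_num) hR1
    rw [abs_div, abs_of_pos hRpos, div_le_iff₀ hRpos]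
    calc |A x * (obukhovRHS lam N0 alpha (u x) (k-1) / d)
        + B x * (obukhovRHS lam N0 alpha (u x) k / d)|
        ≤ (202/100) * (21*lam^2*Nk) := hnum
      _ ≤ 3 * (21*lam^2*Nk) * (99/100) := by nlinarith
      _ ≤ 3 * (21*lam^2*Nk) * Real.sqrt (A x ^ 2 + B x ^ 2) := by nlinarith
  have hrdiff : |rGood lam N0 alpha (u t) k - rGood lam N0 alpha (u 0) k|
      ≤ 3 * (21*lam^2*Nk) * t := by
    have h := Convex.norm_image_sub_le_of_norm_hasDerivWithin_le
      (f := fun y => Real.sqrt (A y ^ 2 + B y ^ 2))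
      (f' := fun x => (A x * (obukhovRHS lam N0 alpha (u x) (k-1) / d)
        + B x * (obukhovRHS lam N0 alpha (u x) k / d))
        / Real.sqrt (A x ^ 2 + B x ^ 2))
      (fun y hy => hR' y hy)
      (fun y hy => by rw [Real.norm_eq_abs]; exact hR'le y hy)
      (convex_Icc _ _) h0I ht
    rw [hre t, hre 0]
    simpa [Real.norm_eq_abs, abs_of_nonneg ht.1] using h
  -- Lipschitz bound for z
  have hg' : ∀ x ∈ I, HasDerivWithinAt
      (fun y => B y / (Real.sqrt (A y ^ 2 + B y ^ 2) - A y))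
      (((obukhovRHS lam N0 alpha (u x) k / d)
          * (Real.sqrt (A x ^ 2 + B x ^ 2) - A x)
        - B x * ((A x * (obukhovRHS lam N0 alpha (u x) (k-1) / d)
            + B x * (obukhovRHS lam N0 alpha (u x) k / d))
            / Real.sqrt (A x ^ 2 + B x ^ 2)
          - obukhovRHS lam N0 alpha (u x) (k-1) / d))
        / (Real.sqrt (A x ^ 2 + B x ^ 2) - A x) ^ 2) I x := by
    intro x hx
    exact (hB' x hx).div ((hR' x hx).sub (hA' x hx)) (hRAne x hx)
  have hg'le : ∀ x ∈ I, |((obukhovRHS lam N0 alpha (u x) k / d)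
          * (Real.sqrt (A x ^ 2 + B x ^ 2) - A x)
        - B x * ((A x * (obukhovRHS lam N0 alpha (u x) (k-1) / d)
            + B x * (obukhovRHS lam N0 alpha (u x) k / d))
            / Real.sqrt (A x ^ 2 + B x ^ 2)
          - obukhovRHS lam N0 alpha (u x) (k-1) / d))
        / (Real.sqrt (A x ^ 2 + B x ^ 2) - A x) ^ 2|
      ≤ 50 * Zm^4 * (21*lam^2*Nk) := by
    intro x hx
    obtain ⟨hR1, hR2⟩ := hfacts x hx
    have ha := ha'le x hx
    have hb := hb'le x hx
    have hRA := hRApos x hx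
    have hBx := hBpos x hx
    have hB1 : B x ≤ 101/100 := le_trans (hBle x) hR2
    have hR'le' := hR'le x hx
    have hD3 : Real.sqrt (A x ^ 2 + B x ^ 2) - A x ≤ 3 := by
      have h1 := neg_abs_le (A x)
      have h2 := hAle x
      linarith
    have hXpos : (0:ℝ) < 21*lam^2*Nk := by positivity
    have hmpos : (0:ℝ) < 2/5/Zm^2 := by positivity
    have hDpos' : 0 < Real.sqrt (A x ^ 2 + B x ^ 2) - A x :=
      lt_of_lt_of_le hmpos hRA
    have hnum : |(obukhovRHS lam N0 alpha (u x) k / d)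
          * (Real.sqrt (A x ^ 2 + B x ^ 2) - A x)
        - B x * ((A x * (obukhovRHS lam N0 alpha (u x) (k-1) / d)
            + B x * (obukhovRHS lam N0 alpha (u x) k / d))
            / Real.sqrt (A x ^ 2 + B x ^ 2)
          - obukhovRHS lam N0 alpha (u x) (k-1) / d)|
        ≤ 8 * (21*lam^2*Nk) := by
      have ht1 : |(obukhovRHS lam N0 alpha (u x) k / d)
          * (Real.sqrt (A x ^ 2 + B x ^ 2) - A x)| ≤ 3 * (21*lam^2*Nk) := by
        rw [abs_mul, abs_of_pos hDpos']
        calc |obukhovRHS lam N0 alpha (u x) k / d|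
              * (Real.sqrt (A x ^ 2 + B x ^ 2) - A x)
            ≤ (21*lam^2*Nk) * 3 := mul_le_mul hb hD3 hDpos'.le hXpos.le
          _ = 3 * (21*lam^2*Nk) := by ring
      have ht2 : |B x * ((A x * (obukhovRHS lam N0 alpha (u x) (k-1) / d)
            + B x * (obukhovRHS lam N0 alpha (u x) k / d))
            / Real.sqrt (A x ^ 2 + B x ^ 2)
          - obukhovRHS lam N0 alpha (u x) (k-1) / d)|
          ≤ 5 * (21*lam^2*Nk) := by
        rw [abs_mul, abs_of_pos hBx]
        have hin : |(A x * (obukhovRHS lam N0 alpha (u x) (k-1) / d)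
            + B x * (obukhovRHS lam N0 alpha (u x) k / d))
            / Real.sqrt (A x ^ 2 + B x ^ 2)
          - obukhovRHS lam N0 alpha (u x) (k-1) / d| ≤ 4 * (21*lam^2*Nk) := by
          calc |(A x * (obukhovRHS lam N0 alpha (u x) (k-1) / d)
              + B x * (obukhovRHS lam N0 alpha (u x) k / d))
              / Real.sqrt (A x ^ 2 + B x ^ 2)
            - obukhovRHS lam N0 alpha (u x) (k-1) / d|
              ≤ |(A x * (obukhovRHS lam N0 alpha (u x) (k-1) / d)
                + B x * (obukhovRHS lam N0 alpha (u x) k / d))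
                / Real.sqrt (A x ^ 2 + B x ^ 2)|
                + |obukhovRHS lam N0 alpha (u x) (k-1) / d| := abs_sub _ _
            _ ≤ 3 * (21*lam^2*Nk) + 21*lam^2*Nk := by linarith
            _ = 4 * (21*lam^2*Nk) := by ring
        nlinarith [abs_nonneg ((A x * (obukhovRHS lam N0 alpha (u x) (k-1) / d)
            + B x * (obukhovRHS lam N0 alpha (u x) k / d))
            / Real.sqrt (A x ^ 2 + B x ^ 2)
          - obukhovRHS lam N0 alpha (u x) (k-1) / d)]
      calc |(obukhovRHS lam N0 alpha (u x) k / d)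
            * (Real.sqrt (A x ^ 2 + B x ^ 2) - A x)
          - B x * ((A x * (obukhovRHS lam N0 alpha (u x) (k-1) / d)
              + B x * (obukhovRHS lam N0 alpha (u x) k / d))
              / Real.sqrt (A x ^ 2 + B x ^ 2)
            - obukhovRHS lam N0 alpha (u x) (k-1) / d)|
          ≤ |(obukhovRHS lam N0 alpha (u x) k / d)
            * (Real.sqrt (A x ^ 2 + B x ^ 2) - A x)|
            + |B x * ((A x * (obukhovRHS lam N0 alpha (u x) (k-1) / d)
              + B x * (obukhovRHS lam N0 alpha (u x) k / d))
              / Real.sqrt (A x ^ 2 + B x ^ 2)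
            - obukhovRHS lam N0 alpha (u x) (k-1) / d)| := abs_sub _ _
        _ ≤ 8 * (21*lam^2*Nk) := by linarith
    have hm2 : (2/5/Zm^2)^2 ≤ (Real.sqrt (A x ^ 2 + B x ^ 2) - A x)^2 := by
      nlinarith
    rw [abs_div, abs_of_pos (pow_pos hDpos' 2)]
    have hdd := div_le_div₀ (by positivity : (0:ℝ) ≤ 8 * (21*lam^2*Nk)) hnum
      (by positivity : (0:ℝ) < (2/5/Zm^2)^2) hm2
    have heq : 8 * (21*lam^2*Nk) / ((2/5/Zm^2)^2) = 50 * Zm^4 * (21*lam^2*Nk) := by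
      field_simp
      ring
    rw [heq] at hdd
    exact hdd
  have hzdiff : |zGood lam N0 alpha (u t) k - zGood lam N0 alpha (u 0) k|
      ≤ 50 * Zm^4 * (21*lam^2*Nk) * t := by
    have h := Convex.norm_image_sub_le_of_norm_hasDerivWithin_le
      (f := fun y => B y / (Real.sqrt (A y ^ 2 + B y ^ 2) - A y))
      (f' := fun x => ((obukhovRHS lam N0 alpha (u x) k / d)
          * (Real.sqrt (A x ^ 2 + B x ^ 2) - A x)
        - B x * ((A x * (obukhovRHS lam N0 alpha (u x) (k-1) / d)
            + B x * (obukhovRHS lam N0 alpha (u x) k / d))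
            / Real.sqrt (A x ^ 2 + B x ^ 2)
          - obukhovRHS lam N0 alpha (u x) (k-1) / d))
        / (Real.sqrt (A x ^ 2 + B x ^ 2) - A x) ^ 2)
      (fun y hy => hg' y hy)
      (fun y hy => by rw [Real.norm_eq_abs]; exact hg'le y hy)
      (convex_Icc _ _) h0I ht
    rw [hzeq2 t ht, hzeq2 0 h0I]
    simpa [Real.norm_eq_abs, abs_of_nonneg ht.1] using h
  
  -- constant-size bounds
  have hrconst : |rGood lam N0 alpha (u t) k - rGood lam N0 alpha (u 0) k|
      ≤ 1/50 := by
    have h1 := abs_le.1 (goodr k hk t ht)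
    have h2 := abs_le.1 (goodr k hk 0 h0I)
    rw [abs_le]
    constructor <;> linarith [h1.1, h1.2, h2.1, h2.2]
  have hzconst : |zGood lam N0 alpha (u t) k - zGood lam N0 alpha (u 0) k|
      ≤ 2 * Zm := by
    have h1 := abs_le.1 (hzub k hk t ht)
    have h2 := abs_le.1 (hzub k hk 0 h0I)
    rw [abs_le]
    constructor <;> linarith [h1.1, h1.2, h2.1, h2.2]
  -- combine into a min bound
  have hy0 : 0 ≤ Nk * t := mul_nonneg hNk.le ht.1
  have hZ4 : Zm ≤ Zm ^ 4 := by
    calc Zm = Zm ^ 1 := (pow_one Zm).symm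
      _ ≤ Zm ^ 4 := pow_le_pow_right₀ hZm1 (by norm_num)
  have hsum : |rGood lam N0 alpha (u t) k - rGood lam N0 alpha (u 0) k|
      + |zGood lam N0 alpha (u t) k - zGood lam N0 alpha (u 0) k|
      ≤ 60 * (21 * lam ^ 2) * Zm ^ 4 * min 1 (Nk * t) := by
    rcases le_total 1 (Nk * t) with hmin | hmin
    · rw [min_eq_left hmin]
      have hlam2 : (1:ℝ) ≤ lam ^ 2 := hl2
      nlinarith [hrconst, hzconst, hZ4, hZm0, pow_pos hZm0 4]
    · rw [min_eq_right hmin]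
      have h3 : (3:ℝ) * (21*lam^2*Nk) * t ≤ 3 * (21*lam^2) * Zm^4 * (Nk*t) := by
        nlinarith [mul_nonneg (mul_nonneg (by positivity : (0:ℝ) ≤ 21*lam^2)
          hNk.le) ht.1, pow_pos hZm0 4]
      have h4 : (50:ℝ) * Zm^4 * (21*lam^2*Nk) * t
          ≤ 50 * (21*lam^2) * Zm^4 * (Nk*t) := by nlinarith []
      nlinarith [hrdiff, hzdiff, h3, h4, mul_nonneg (mul_nonneg
        (by positivity : (0:ℝ) ≤ 21*lam^2) (pow_pos hZm0 4).le)
        (mul_nonneg hNk.le ht.1)]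
  -- min 1 y ≤ y ^ (-s/2)
  have hminpow : min 1 (Nk * t) ≤ (Nk * t) ^ (-s/2) := by
    rcases eq_or_lt_of_le hy0 with h0 | h0
    · rw [← h0]
      rw [Real.zero_rpow (by linarith : -s/2 ≠ 0)]
      simp
    · rcases le_total (Nk * t) 1 with h1 | h1
      · rw [min_eq_right h1]
        have := Real.rpow_le_rpow_of_exponent_ge h0 h1 (by linarith : -s/2 ≤ 1)
        rwa [Real.rpow_one] at this
      · rw [min_eq_left h1]
        have := Real.rpow_le_rpow_of_exponent_le h1 (by linarith : 0 ≤ -s/2)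
        rwa [Real.rpow_zero] at this
  -- the λ-power cancellation
  have hF2 : Nk = lam ^ (2*(k:ℝ)) * N0 ^ 2 := by
    rw [hNk_def, freq, mul_pow, ← Real.rpow_intCast lam (k:ℤ),
      ← Real.rpow_natCast (lam ^ (((k:ℤ)):ℝ)) 2, ← Real.rpow_mul hl0.le]
    congr 2
    push_cast
    ring
  have hkey : lam ^ (s * (k:ℝ)) * (Nk * t) ^ (-s/2) = (N0^2*t) ^ (-s/2) := by
    rw [hF2, mul_assoc,
      Real.mul_rpow (Real.rpow_nonneg hl0.le _) (mul_nonneg (by positivity) ht.1),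
      ← Real.rpow_mul hl0.le, ← mul_assoc, ← Real.rpow_add hl0,
      show s*(k:ℝ) + 2*(k:ℝ)*(-s/2) = 0 by ring, Real.rpow_zero, one_mul]
  -- conclusion
  have hlamsk : (0:ℝ) < lam ^ (s * (k:ℝ)) := Real.rpow_pos_of_pos hl0 _
  calc lam ^ (s * (k:ℝ)) *
        (|rGood lam N0 alpha (u t) k - rGood lam N0 alpha (u 0) k|
          + |zGood lam N0 alpha (u t) k - zGood lam N0 alpha (u 0) k|)
      ≤ lam ^ (s * (k:ℝ)) * (60 * (21 * lam ^ 2) * Zm ^ 4 * min 1 (Nk * t)) :=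
        mul_le_mul_of_nonneg_left hsum hlamsk.le
    _ ≤ lam ^ (s * (k:ℝ)) * (60 * (21 * lam ^ 2) * Zm ^ 4 * (Nk * t) ^ (-s/2)) := by
        have hKpos : (0:ℝ) ≤ 60 * (21 * lam ^ 2) * Zm ^ 4 := by positivity
        exact mul_le_mul_of_nonneg_left
          (mul_le_mul_of_nonneg_left hminpow hKpos) hlamsk.le
    _ = 60 * (21 * lam ^ 2) * Zm ^ 4 * (lam ^ (s * (k:ℝ)) * (Nk * t) ^ (-s/2)) := by
        ring
    _ = 60 * (21 * lam ^ 2) * Zm ^ 4 * (N0^2*t) ^ (-s/2) := by rw [hkey]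
    _ = 60 * (21 * lam ^ 2) * Zm ^ 4 * (N0 ^ 2 * t) ^ (-s / 2) := by norm_num
end
end

section
/- Let u be a solution of the Obukhov dyadic model on [0,T] such that u_k(t) ≥ 0 for all k ∈ ℕ and all t ∈ [0,T]. Then for every t ∈ [0,T], the energy inequality ∑_{k∈ℕ} u_k(t)²/2 + ∫₀^t ∑_{k∈ℕ} N_k² u_k(s)² ds ≤ ∑_{k∈ℕ} u_k(0)²/2 holds, where both sides are interpreted as values in [0,∞]. -/
open Set MeasureTheory
open scoped ENNReal BigOperators

noncomputable section

/-- Energy inequality for nonnegative solutions of the Obukhov dyadic model,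
with both sides valued in `[0,∞]`. -/
theorem energy_inequality_of_nonneg (lam N0 alpha T : ℝ) (hlam : 1 < lam)
    (hN0 : 0 < N0) (hT : 0 ≤ T) (u : ℝ → ℕ → ℝ)
    (hsol : IsObukhovSolutionOn lam N0 alpha u (Icc 0 T))
    (hpos : ∀ k : ℕ, ∀ t ∈ Icc (0 : ℝ) T, 0 ≤ u t k) :
    ∀ t ∈ Icc (0 : ℝ) T,
      (∑' k : ℕ, ENNReal.ofReal ((u t k) ^ 2 / 2))
        + (∫⁻ s in Ioc (0 : ℝ) t,
            ∑' k : ℕ, ENNReal.ofReal (freq lam N0 (k : ℤ) ^ 2 * (u s k) ^ 2))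
        ≤ ∑' k : ℕ, ENNReal.ofReal ((u 0 k) ^ 2 / 2) := by
  have hlam0 : (0:ℝ) < lam := lt_trans one_pos hlam
  have hfreq : ∀ j : ℤ, 0 < freq lam N0 j := fun j => by
    unfold freq; positivity
  intro t ht
  obtain ⟨ht0, htT⟩ := ht
  have hsub : Icc (0:ℝ) t ⊆ Icc 0 T := Icc_subset_Icc le_rfl htT
  have hsub' : Ioc (0:ℝ) t ⊆ Icc 0 T := Ioc_subset_Icc_self.trans hsub
  have hcont : ∀ k, ContinuousOn (fun s => u s k) (Icc 0 T) :=
    fun k s hs => (hsol k s hs).continuousWithinAt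
  -- the real-valued energy inequality for truncations
  have key : ∀ n : ℕ,
      (∑ k ∈ Finset.range n, (u t k) ^ 2 / 2)
        + ∫ s in Ioc (0:ℝ) t, (∑ k ∈ Finset.range n, freq lam N0 (k : ℤ) ^ 2 * (u s k) ^ 2)
        ≤ ∑ k ∈ Finset.range n, (u 0 k) ^ 2 / 2 := by
    intro n
    set E : ℝ → ℝ := fun s => ∑ k ∈ Finset.range n, (u s k) ^ 2 / 2 with hE
    set E' : ℝ → ℝ := fun s => ∑ k ∈ Finset.range n,
      u s k * obukhovRHS lam N0 alpha (u s) k with hE'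
    set g : ℝ → ℝ := fun s => ∑ k ∈ Finset.range n,
      freq lam N0 (k : ℤ) ^ 2 * (u s k) ^ 2 with hg
    -- derivative of E
    have hD : ∀ x ∈ Icc (0:ℝ) T, HasDerivWithinAt E (E' x) (Icc 0 T) x := by
      intro x hx
      apply HasDerivWithinAt.fun_sum
      intro k _
      have h := hsol k x hx
      have h2 := (h.mul h).div_const 2
      convert h2 using 1
      · rfl
      · funext y; simp only [Pi.mul_apply]; ring
      · ring
    -- pointwise bound E' ≤ -g on Icc 0 T
    have hbound : ∀ x ∈ Icc (0:ℝ) T, E' x ≤ -g x := by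
      intro x hx
      set v : ℕ → ℝ := fun k =>
        if k = 0 then 0 else
          freq lam N0 ((k : ℤ) - 1) ^ alpha * u x (k - 1) * u x k ^ 2 with hv
      have hterm : ∀ k, u x k * obukhovRHS lam N0 alpha (u x) k
          = -(freq lam N0 (k : ℤ) ^ 2 * (u x k) ^ 2) + (v k - v (k + 1)) := by
        intro k
        simp only [hv, obukhovRHS]
        by_cases hk : k = 0
        · subst hk
          simp only [if_pos rfl, Nat.add_sub_cancel]
          norm_num
          ring
        · simp only [if_neg hk, Nat.add_eq_zero, one_ne_zero, and_false, if_false,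
            Nat.add_sub_cancel]
          push_cast [Nat.cast_sub (Nat.one_le_iff_ne_zero.2 hk)]
          ring_nf
      have hvnn : ∀ k, 0 ≤ v k := by
        intro k
        simp only [hv]
        by_cases hk : k = 0
        · simp [hk]
        · simp only [if_neg hk]
          have := Real.rpow_nonneg (le_of_lt (hfreq ((k:ℤ)-1))) alpha
          have h1 := hpos (k-1) x hx
          have h2 := hpos k x hx
          positivity
      calc E' x = ∑ k ∈ Finset.range n,
            (-(freq lam N0 (k : ℤ) ^ 2 * (u x k) ^ 2) + (v k - v (k + 1))) := by
              simp only [hE']; exact Finset.sum_congr rfl fun k _ => hterm k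
        _ = -g x + (v 0 - v n) := by
              rw [Finset.sum_add_distrib, Finset.sum_range_sub' v n, hg,
                ← Finset.sum_neg_distrib]
        _ ≤ -g x := by
              have : v 0 - v n ≤ 0 := by simp [hv]; exact hvnn n
              linarith
    -- continuity of E, E', g on Icc 0 T
    have hcontE : ContinuousOn E (Icc 0 T) := fun x hx => (hD x hx).continuousWithinAt
    have hcontE' : ContinuousOn E' (Icc 0 T) := by
      apply continuousOn_finset_sum
      intro k _
      apply (hcont k).mul
      simp only [obukhovRHS]
      apply ContinuousOn.sub
      apply ContinuousOn.add
      · exact (continuousOn_const).mul (hcont k)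
      · by_cases hk : k = 0
        · simp only [hk, if_pos]
          exact continuousOn_const
        · simp only [if_neg hk]
          exact (continuousOn_const.mul (hcont (k-1))).mul (hcont k)
      · exact continuousOn_const.mul ((hcont (k+1)).pow 2)
    have hcontg : ContinuousOn g (Icc 0 T) := by
      apply continuousOn_finset_sum
      intro k _
      exact continuousOn_const.mul ((hcont k).pow 2)
    -- FTC
    have hftc : ∫ s in (0:ℝ)..t, E' s = E t - E 0 := by
      apply intervalIntegral.integral_eq_sub_of_hasDeriv_right_of_le ht0
        (hcontE.mono hsub)
      · intro x hx
        have hxT : x ∈ Icc (0:ℝ) T := ⟨le_of_lt hx.1, le_trans (le_of_lt hx.2) htT⟩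
        refine (hD x hxT).mono_of_mem_nhdsWithin ?_
        apply mem_nhdsWithin.2
        exact ⟨Iio T ∩ Ioi 0, (isOpen_Iio.inter isOpen_Ioi),
          ⟨lt_of_lt_of_le hx.2 htT, hx.1⟩,
          fun y hy => ⟨le_of_lt hy.1.2, le_of_lt hy.1.1⟩⟩
      · exact (hcontE'.mono (by
          rw [uIcc_of_le ht0]; exact hsub)).intervalIntegrable
    have hIE' : IntervalIntegrable E' volume 0 t :=
      (hcontE'.mono (by rw [uIcc_of_le ht0]; exact hsub)).intervalIntegrable
    have hIg : IntervalIntegrable g volume 0 t :=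
      (hcontg.mono (by rw [uIcc_of_le ht0]; exact hsub)).intervalIntegrable
    have hmono : ∫ s in (0:ℝ)..t, E' s ≤ ∫ s in (0:ℝ)..t, -g s := by
      apply intervalIntegral.integral_mono_on ht0 hIE' hIg.neg
      intro x hx
      exact hbound x (hsub hx)
    rw [hftc] at hmono
    rw [intervalIntegral.integral_neg] at hmono
    have := intervalIntegral.integral_of_le (μ := volume) (f := g) ht0
    simp only [hE, hg] at *
    linarith [hmono, this ▸ le_refl (∫ s in (0:ℝ)..t, g s)]
  -- measurability
  have hmeas : ∀ k : ℕ, AEMeasurable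
      (fun s => ENNReal.ofReal (freq lam N0 (k : ℤ) ^ 2 * (u s k) ^ 2))
      (volume.restrict (Ioc (0:ℝ) t)) := by
    intro k
    apply ENNReal.measurable_ofReal.comp_aemeasurable
    apply AEMeasurable.const_mul
    exact (((hcont k).mono hsub').aemeasurable measurableSet_Ioc).pow_const 2
  rw [MeasureTheory.lintegral_tsum hmeas]
  rw [ENNReal.tsum_eq_iSup_nat (f := fun k => ENNReal.ofReal ((u t k) ^ 2 / 2)),
    ENNReal.tsum_eq_iSup_nat]
  apply ENNReal.iSup_add_iSup_le
  intro i j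
  set n := max i j with hn
  have hSi : ∑ k ∈ Finset.range i, ENNReal.ofReal ((u t k) ^ 2 / 2)
      ≤ ∑ k ∈ Finset.range n, ENNReal.ofReal ((u t k) ^ 2 / 2) :=
    Finset.sum_le_sum_of_subset (Finset.range_subset_range.2 (le_max_left i j))
  have hIj : ∑ k ∈ Finset.range j,
        (∫⁻ s in Ioc (0:ℝ) t, ENNReal.ofReal (freq lam N0 (k : ℤ) ^ 2 * (u s k) ^ 2))
      ≤ ∑ k ∈ Finset.range n,
        (∫⁻ s in Ioc (0:ℝ) t, ENNReal.ofReal (freq lam N0 (k : ℤ) ^ 2 * (u s k) ^ 2)) :=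
    Finset.sum_le_sum_of_subset (Finset.range_subset_range.2 (le_max_right i j))
  refine le_trans (add_le_add hSi hIj) ?_
  -- now the truncated ENNReal inequality
  set g : ℝ → ℝ := fun s => ∑ k ∈ Finset.range n,
    freq lam N0 (k : ℤ) ^ 2 * (u s k) ^ 2 with hg
  have hgnn : ∀ s ∈ Ioc (0:ℝ) t, 0 ≤ g s := by
    intro s _
    apply Finset.sum_nonneg
    intro k _
    positivity
  have hgint : IntegrableOn g (Ioc (0:ℝ) t) volume := by
    apply MeasureTheory.IntegrableOn.mono_set (t := Icc (0:ℝ) t)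
    · apply ContinuousOn.integrableOn_Icc
      apply continuousOn_finset_sum
      intro k _
      exact continuousOn_const.mul (((hcont k).mono hsub).pow 2)
    · exact Ioc_subset_Icc_self
  have hsumI : ∑ k ∈ Finset.range n,
        (∫⁻ s in Ioc (0:ℝ) t, ENNReal.ofReal (freq lam N0 (k : ℤ) ^ 2 * (u s k) ^ 2))
      = ENNReal.ofReal (∫ s in Ioc (0:ℝ) t, g s) := by
    rw [← MeasureTheory.lintegral_finset_sum' _ (fun k _ => hmeas k)]
    rw [MeasureTheory.ofReal_integral_eq_lintegral_ofReal hgint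
      ((ae_restrict_iff' measurableSet_Ioc).2 (Filter.Eventually.of_forall hgnn))]
    apply lintegral_congr
    intro s
    rw [ENNReal.ofReal_sum_of_nonneg]
    intro k _
    positivity
  rw [hsumI]
  have hSsum : ∑ k ∈ Finset.range n, ENNReal.ofReal ((u t k) ^ 2 / 2)
      = ENNReal.ofReal (∑ k ∈ Finset.range n, (u t k) ^ 2 / 2) := by
    rw [ENNReal.ofReal_sum_of_nonneg]
    intro k _
    positivity
  rw [hSsum, ← ENNReal.ofReal_add (by positivity)
    (MeasureTheory.integral_nonneg_of_ae
      ((ae_restrict_iff' measurableSet_Ioc).2 (Filter.Eventually.of_forall hgnn)))]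
  refine le_trans (ENNReal.ofReal_le_ofReal (key n)) ?_
  rw [ENNReal.ofReal_sum_of_nonneg (fun k _ => by positivity)]
  exact ENNReal.sum_le_tsum _
end
end

section
/- Let c, M > 0 and δ = M²/c. Suppose x, y : J → ℝ are differentiable on an interval J and satisfy x′(t) = −c y(t)² and y′(t) = −M² y(t) + c x(t) y(t) for all t ∈ J. Then the quantity (x(t) − δ)² + y(t)² is constant on J. -/
open Set

/-- The decoupled binary system conserves the squared distance to `(δ, 0)`. -/
theorem binary_system_first_integral (c M δ : ℝ) (hc : 0 < c) (hM : 0 < M)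
    (hδ : δ = M ^ 2 / c) (J : Set ℝ) (hJ : Convex ℝ J) (x y : ℝ → ℝ)
    (hx : ∀ t ∈ J, HasDerivWithinAt x (-c * (y t) ^ 2) J t)
    (hy : ∀ t ∈ J, HasDerivWithinAt y (-(M ^ 2) * y t + c * x t * y t) J t) :
    ∀ s ∈ J, ∀ t ∈ J,
      (x s - δ) ^ 2 + (y s) ^ 2 = (x t - δ) ^ 2 + (y t) ^ 2 := by
  have hδc : δ * c = M ^ 2 := by
    rw [hδ]; field_simp
  have hE : ∀ t ∈ J, HasDerivWithinAt (fun t => (x t - δ) ^ 2 + (y t) ^ 2) 0 J t := by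
    intro t ht
    have h1 := (((hx t ht).sub_const δ).pow 2).add ((hy t ht).pow 2)
    refine h1.congr_deriv ?_
    ring_nf
    nlinarith [hδc]
  intro s hs t ht
  have := hJ.norm_image_sub_le_of_norm_hasDerivWithin_le
    (f := fun t => (x t - δ) ^ 2 + (y t) ^ 2) (C := 0) hE
    (by intro u hu; simp) ht hs
  rw [zero_mul] at this
  exact sub_eq_zero.mp (norm_le_zero_iff.mp this)
end

section
/- Let c, M > 0, δ = M²/c, and A > 0. Then the functions x(t) = 2δ/(1 + A e^{2M²t}) and y(t) = 2δ √A e^{M²t}/(1 + A e^{2M²t}) satisfy x′(t) = −c y(t)² and y′(t) = −M² y(t) + c x(t) y(t) for all t ∈ ℝ, and moreover (x(t) − δ)² + y(t)² = δ² for all t ∈ ℝ. -/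
open Set

/-- The explicit semicircular trajectory of the decoupled binary system. -/
theorem binary_system_explicit_solution (c M δ A : ℝ) (hc : 0 < c) (hM : 0 < M)
    (hδ : δ = M ^ 2 / c) (hA : 0 < A) :
    ∀ t : ℝ,
      HasDerivAt (fun t' => 2 * δ / (1 + A * Real.exp (2 * M ^ 2 * t')))
        (-c * (2 * δ * Real.sqrt A * Real.exp (M ^ 2 * t)
            / (1 + A * Real.exp (2 * M ^ 2 * t))) ^ 2) t ∧
      HasDerivAt (fun t' => 2 * δ * Real.sqrt A * Real.exp (M ^ 2 * t')
            / (1 + A * Real.exp (2 * M ^ 2 * t')))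
        (-(M ^ 2) * (2 * δ * Real.sqrt A * Real.exp (M ^ 2 * t)
            / (1 + A * Real.exp (2 * M ^ 2 * t)))
          + c * (2 * δ / (1 + A * Real.exp (2 * M ^ 2 * t)))
            * (2 * δ * Real.sqrt A * Real.exp (M ^ 2 * t)
                / (1 + A * Real.exp (2 * M ^ 2 * t)))) t ∧
      (2 * δ / (1 + A * Real.exp (2 * M ^ 2 * t)) - δ) ^ 2
        + (2 * δ * Real.sqrt A * Real.exp (M ^ 2 * t)
            / (1 + A * Real.exp (2 * M ^ 2 * t))) ^ 2 = δ ^ 2 := by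
  intro t
  have hcδ : c * δ = M ^ 2 := by
    rw [hδ]; field_simp
  have hsA : Real.sqrt A ^ 2 = A := Real.sq_sqrt hA.le
  have he2 : Real.exp (2 * M ^ 2 * t) = Real.exp (M ^ 2 * t) ^ 2 := by
    rw [show 2 * M ^ 2 * t = M ^ 2 * t + M ^ 2 * t by ring, Real.exp_add]; ring
  have hDpos : 0 < 1 + A * Real.exp (2 * M ^ 2 * t) :=
    by positivity
  have hDne : (1 + A * Real.exp (2 * M ^ 2 * t)) ≠ 0 := ne_of_gt hDpos
  -- derivative of denominator
  have hD : HasDerivAt (fun t' => 1 + A * Real.exp (2 * M ^ 2 * t'))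
      (A * (Real.exp (2 * M ^ 2 * t) * (2 * M ^ 2))) t := by
    have h1 : HasDerivAt (fun t' : ℝ => 2 * M ^ 2 * t') (2 * M ^ 2) t := by
      simpa using (hasDerivAt_id t).const_mul (2 * M ^ 2)
    exact ((h1.exp).const_mul A).const_add 1
  -- derivative of numerator of y
  have hN : HasDerivAt (fun t' => 2 * δ * Real.sqrt A * Real.exp (M ^ 2 * t'))
      (2 * δ * Real.sqrt A * (Real.exp (M ^ 2 * t) * M ^ 2)) t := by
    have h1 : HasDerivAt (fun t' : ℝ => M ^ 2 * t') (M ^ 2) t := by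
      simpa using (hasDerivAt_id t).const_mul (M ^ 2)
    exact (h1.exp).const_mul (2 * δ * Real.sqrt A)
  refine ⟨?_, ?_, ?_⟩
  · have hx := (hasDerivAt_const t (2 * δ)).div hD hDne
    refine hx.congr_deriv (Eq.symm ?_)
    rw [he2]
    field_simp
    linear_combination (-4 * δ * A * Real.exp (M ^ 2 * t) ^ 2) * hcδ
      + (-4 * c * δ ^ 2 * Real.exp (M ^ 2 * t) ^ 2) * hsA
  · have hy := hN.div hD hDne
    refine hy.congr_deriv (Eq.symm ?_)
    rw [he2]
    field_simp
    linear_combination (2 * δ) * hcδ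
  · rw [he2]
    field_simp
    rw [hsA]; ring
end
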